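/- arXiv:1705.02978 — 7 statements merged into one kernel-verified Lean document; each statement's English description precedes it below -/
import Mathlib

section
/- Let d ≥ 2, t ≥ 1, let v_1, …, v_d be pairwise different positive real numbers and let α_1, …, α_{t+d−1} be pairwise different nonnegative integers, and let V ∈ ℝ^{(t+d−1)×d} be the Vandermonde-type matrix with entries V_{j,i} = v_i^{α_j}. For every (d−1)-element subset S of {1, …, t+d−1} define Q_S ∈ ℝ^d by letting (Q_S)_i be the determinant of the (d−1)×(d−1) submatrix of V with rows indexed by S and columns indexed by {1, …, d} \ {i}. Then the binom(t+d−1, d−1) homogeneous polynomials x ↦ (Q_S · x)^t, where S ranges over all (d−1)-element subsets of {1, …, t+d−1}, form a basis of Hom_t(ℝ^d). -/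
open Polynomial in
private lemma fewnomial_aux : ∀ (n : ℕ) (p : Polynomial ℝ), p ≠ 0 → p.support.card ≤ n →
    ∀ Z : Finset ℝ, (∀ x ∈ Z, 0 < x ∧ p.IsRoot x) → Z.card < n := by
  intro n
  induction n with
  | zero =>
    intro p hp hs Z _
    rw [Nat.le_zero, Finset.card_eq_zero, Polynomial.support_eq_empty] at hs
    exact absurd hs hp
  | succ n ih =>
    intro p hp hs Z hZ
    set m := p.natTrailingDegree with hm
    set r : Polynomial ℝ := X * derivative p - C (m : ℝ) * p with hr
    have hrc : ∀ k, r.coeff k = ((k : ℝ) - m) * p.coeff k := by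
      intro k
      match k with
      | 0 => simp [hr, coeff_derivative, mul_comm]
      | k+1 =>
        simp [hr, coeff_X_mul, coeff_derivative]
        ring
    have hsub : r.support ⊆ p.support.erase m := by
      intro k hk
      rw [mem_support_iff, hrc] at hk
      rw [Finset.mem_erase, mem_support_iff]
      constructor
      · rintro rfl; simp at hk
      · intro h; rw [h, mul_zero] at hk; exact hk rfl
    by_cases hr0 : r = 0
    · -- p is a monomial, no positive roots
      have hmono : ∀ k, k ≠ m → p.coeff k = 0 := by
        intro k hkm
        by_contra h
        have : k ∈ r.support := by
          rw [mem_support_iff, hrc]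
          exact mul_ne_zero (sub_ne_zero.2 (by exact_mod_cast hkm)) h
        rw [hr0] at this; simp at this
      have hpm : p = Polynomial.monomial m (p.coeff m) := by
        ext k
        rcases eq_or_ne k m with rfl | hk
        · simp
        · rw [hmono k hk, coeff_monomial, if_neg (by omega)]
      have hZe : Z = ∅ := by
        rw [Finset.eq_empty_iff_forall_notMem]
        intro x hx
        obtain ⟨hx0, hxr⟩ := hZ x hx
        rw [IsRoot, hpm, eval_monomial] at hxr
        rcases mul_eq_zero.1 hxr with h | h
        · exact hp (by rw [hpm, h, map_zero])
        · exact absurd h (pow_ne_zero _ (ne_of_gt hx0))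
      simp [hZe]
    · -- interleaving
      have hm_mem : m ∈ p.support := natTrailingDegree_mem_support_of_nonzero hp
      have hrcard : r.support.card ≤ n := by
        have h1 := Finset.card_le_card hsub
        have h2 : (p.support.erase m).card = p.support.card - 1 :=
          Finset.card_erase_of_mem hm_mem
        omega
      set T := r.roots.toFinset.filter (fun x => 0 < x) with hT
      have key : Z.card ≤ (T \ Z).card + 1 := by
        apply Finset.card_le_diff_of_interleaved
        intro x hx y hy hxy _
        obtain ⟨hx0, hxr⟩ := hZ x hx
        obtain ⟨hy0, hyr⟩ := hZ y hy
        set f : ℝ → ℝ := fun u => p.eval u / u ^ m with hf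
        have hcont : ContinuousOn f (Set.Icc x y) := by
          apply ContinuousOn.div (p.continuousOn) (continuousOn_pow m)
          intro u hu
          exact pow_ne_zero _ (ne_of_gt (lt_of_lt_of_le hx0 hu.1))
        have hfxy : f x = f y := by
          simp [hf, hxr.eq_zero, hyr.eq_zero]
        obtain ⟨c, hc, hc0⟩ := exists_deriv_eq_zero hxy hcont hfxy
        have hcpos : 0 < c := lt_trans hx0 hc.1
        have hd : HasDerivAt f ((p.derivative.eval c * c ^ m -
            p.eval c * ((m : ℝ) * c ^ (m - 1))) / (c ^ m) ^ 2) c :=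
          (p.hasDerivAt c).div (hasDerivAt_pow m c) (pow_ne_zero _ (ne_of_gt hcpos))
        have hnum : p.derivative.eval c * c ^ m - p.eval c * ((m : ℝ) * c ^ (m - 1)) = 0 := by
          have := hd.deriv
          rw [hc0] at this
          field_simp at this
          linarith [this]
        have hrz : r.eval c = 0 := by
          have hre : r.eval c = c * p.derivative.eval c - (m : ℝ) * p.eval c := by
            simp [hr]
          rcases Nat.eq_zero_or_pos m with hm0 | hm1
          · rw [hm0] at hnum
            simp only [pow_zero, mul_one, Nat.cast_zero, zero_mul, mul_zero, sub_zero] at hnum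
            rw [hre, hm0, hnum]
            push_cast; ring
          · have hcm : (c:ℝ) ^ (m-1) * c = c ^ m := by
              rw [← pow_succ]; congr 1; omega
            have hnum' : p.derivative.eval c * c ^ m = p.eval c * ((m:ℝ) * c ^ (m-1)) := by
              linarith
            have h3 : r.eval c * c ^ m = 0 := by
              calc r.eval c * c ^ m
                  = c * (p.derivative.eval c * c ^ m) - (m:ℝ) * p.eval c * c ^ m := by
                    rw [hre]; ring
                _ = c * (p.eval c * ((m:ℝ) * c ^ (m-1))) - (m:ℝ) * p.eval c * c ^ m := by
                    rw [hnum']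
                _ = (m:ℝ) * p.eval c * (c ^ (m-1) * c) - (m:ℝ) * p.eval c * c ^ m := by ring
                _ = 0 := by rw [hcm]; ring
            exact (mul_eq_zero.1 h3).resolve_right (pow_ne_zero _ (ne_of_gt hcpos))
        refine ⟨c, ?_, hc.1, hc.2⟩
        rw [hT, Finset.mem_filter, Multiset.mem_toFinset, mem_roots hr0]
        exact ⟨hrz, hcpos⟩
      have hTcard : T.card < n := by
        apply ih r hr0 hrcard
        intro x hx
        rw [hT, Finset.mem_filter, Multiset.mem_toFinset, mem_roots hr0] at hx
        exact ⟨hx.2, hx.1⟩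
      have := Finset.card_le_card (Finset.sdiff_subset (s := T) (t := Z))
      omega

private lemma genVandermonde_det_ne_zero {n : ℕ} (β : Fin n → ℕ) (hβ : Function.Injective β)
    (w : Fin n → ℝ) (hw : ∀ i, 0 < w i) (hwi : Function.Injective w) :
    Matrix.det (Matrix.of fun k i : Fin n => w i ^ β k) ≠ 0 := by
  intro hdet
  obtain ⟨c, hc0, hcv⟩ := Matrix.exists_vecMul_eq_zero_iff.2 hdet
  set p : Polynomial ℝ := ∑ k, Polynomial.C (c k) * Polynomial.X ^ (β k) with hp
  have hcoeff : ∀ k0, p.coeff (β k0) = c k0 := by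
    intro k0
    rw [hp, Polynomial.finset_sum_coeff]
    rw [Finset.sum_eq_single k0]
    · simp
    · intro k _ hk
      simp [Polynomial.coeff_X_pow, fun h => hk (hβ h), Ne.symm]
      intro h
      exact absurd (hβ h.symm) hk
    · simp
  have hpne : p ≠ 0 := by
    obtain ⟨k0, hk0⟩ := Function.ne_iff.1 hc0
    intro h
    apply hk0
    rw [← hcoeff k0, h]
    simp
  have hsupp : p.support ⊆ Finset.image β Finset.univ := by
    intro m hm
    rw [Polynomial.mem_support_iff, hp, Polynomial.finset_sum_coeff] at hm
    by_contra hmi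
    apply hm
    apply Finset.sum_eq_zero
    intro k _
    rw [Polynomial.coeff_C_mul, Polynomial.coeff_X_pow, if_neg, mul_zero]
    intro h
    exact hmi (Finset.mem_image.2 ⟨k, Finset.mem_univ _, h.symm⟩)
  have hcard : p.support.card ≤ n := le_trans (Finset.card_le_card hsupp)
    (le_trans Finset.card_image_le (by simp))
  have heval : ∀ i, p.IsRoot (w i) := by
    intro i
    have := congrFun hcv i
    rw [Matrix.vecMul, dotProduct] at this
    simpa [hp, Polynomial.eval_finset_sum, Matrix.vecMul] using this
  have := fewnomial_aux n p hpne hcard (Finset.image w Finset.univ)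
    (by
      intro x hx
      obtain ⟨i, _, rfl⟩ := Finset.mem_image.1 hx
      exact ⟨hw i, heval i⟩)
  rw [Finset.card_image_of_injective _ hwi] at this
  simp at this


open MvPolynomial

open MvPolynomial

noncomputable def Dop {m : ℕ} (w : Fin m → ℝ) :
    MvPolynomial (Fin m) ℝ →ₗ[ℝ] MvPolynomial (Fin m) ℝ :=
  ∑ i, w i • (pderiv i (R := ℝ)).toLinearMap

noncomputable def Lin {m : ℕ} (q : Fin m → ℝ) : MvPolynomial (Fin m) ℝ :=
  ∑ i, MvPolynomial.C (q i) * MvPolynomial.X i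

lemma pderiv_Lin {m : ℕ} (q : Fin m → ℝ) (i : Fin m) :
    pderiv i (Lin q) = MvPolynomial.C (q i) := by
  rw [Lin, map_sum]
  rw [Finset.sum_eq_single i]
  · simp [pderiv_X]
  · intro j _ hji
    simp [pderiv_X, Pi.single_apply, Ne.symm hji]
  · simp

lemma Dop_pow {m : ℕ} (w q : Fin m → ℝ) (k : ℕ) :
    Dop w (Lin q ^ (k + 1)) = (((k : ℝ) + 1) * ∑ i, q i * w i) • Lin q ^ k := by
  rw [Dop]
  simp only [LinearMap.sum_apply, LinearMap.smul_apply]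
  have h : ∀ i : Fin m, pderiv i (Lin q ^ (k+1)) = (((k:ℝ)+1) * q i) • Lin q ^ k := by
    intro i
    rw [Derivation.leibniz_pow, pderiv_Lin, Nat.add_sub_cancel, smul_eq_mul, mul_comm, C_mul',
      ← Nat.cast_smul_eq_nsmul ℝ, smul_smul]
    push_cast
    ring_nf
  calc ∑ i, w i • (pderiv i) (Lin q ^ (k + 1))
      = ∑ i, (((k:ℝ)+1) * (q i * w i)) • Lin q ^ k := by
        refine Finset.sum_congr rfl fun i _ => ?_
        rw [h i, smul_smul]
        ring_nf
    _ = (((k : ℝ) + 1) * ∑ i, q i * w i) • Lin q ^ k := by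
        rw [← Finset.sum_smul, ← Finset.mul_sum]

noncomputable def opList {m : ℕ} (ws : List (Fin m → ℝ)) :
    MvPolynomial (Fin m) ℝ →ₗ[ℝ] MvPolynomial (Fin m) ℝ :=
  (ws.map Dop).foldr (fun a b => a ∘ₗ b) LinearMap.id

lemma opList_pow {m : ℕ} (q : Fin m → ℝ) (ws : List (Fin m → ℝ)) (s : ℕ) :
    ∃ D : ℕ, 0 < D ∧ opList ws (Lin q ^ (ws.length + s)) =
      ((D : ℝ) * (ws.map (fun w => ∑ i, q i * w i)).prod) • Lin q ^ s := by
  induction ws generalizing s with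
  | nil => exact ⟨1, one_pos, by simp [opList]⟩
  | cons w ws ih =>
    obtain ⟨D, hD, heq⟩ := ih (s + 1)
    refine ⟨D * (s + 1), by positivity, ?_⟩
    have hlen : (w :: ws).length + s = ws.length + (s + 1) := by simp; omega
    have hc : opList (w :: ws) = Dop w ∘ₗ opList ws := rfl
    rw [hlen, hc, LinearMap.comp_apply, heq, map_smul, Dop_pow]
    rw [smul_smul, List.map_cons, List.prod_cons]
    push_cast
    congr 1
    ring

/-- Vandermonde-minor construction of directions `Q_S` such that the
polynomials `x ↦ (Q_S ⬝ x)^t`, indexed by the `(d-1)`-element subsets `S` of the row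
index set, form a basis of `Hom_t(ℝ^d)`. -/
theorem vandermonde_minors_basis (d t : ℕ) (hd : 2 ≤ d) (ht : 1 ≤ t)
    (v : Fin d → ℝ) (hv_pos : ∀ i, 0 < v i) (hv_inj : Function.Injective v)
    (α : Fin (t + d - 1) → ℕ) (hα_inj : Function.Injective α)
    (V : Matrix (Fin (t + d - 1)) (Fin d) ℝ) (hV : ∀ j i, V j i = v i ^ α j)
    (Q : {S : Finset (Fin (t + d - 1)) // S.card = d - 1} → Fin d → ℝ)
    (hQ : ∀ S i, Q S i = Matrix.det (Matrix.of fun a b : Fin (d - 1) =>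
      V (S.val.orderIsoOfFin S.property a)
        ((Finset.univ.erase i).orderIsoOfFin
          (by simp [Finset.card_erase_of_mem]) b))) :
    LinearIndependent ℝ
        (fun S : {S : Finset (Fin (t + d - 1)) // S.card = d - 1} =>
          (∑ i, MvPolynomial.C (Q S i) * MvPolynomial.X i) ^ t) ∧
      Submodule.span ℝ
          (Set.range fun S : {S : Finset (Fin (t + d - 1)) // S.card = d - 1} =>
            (∑ i, MvPolynomial.C (Q S i) * MvPolynomial.X i) ^ t) =
        MvPolynomial.homogeneousSubmodule (Fin d) ℝ t := by
  obtain ⟨e, rfl⟩ : ∃ e, d = e + 1 := ⟨d - 1, by omega⟩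
  have he : 1 ≤ e := by omega
  -- Notation (definitional abbreviations)
  let N : ℕ := t + (e + 1) - 1
  let ι := {S : Finset (Fin N) // S.card = e + 1 - 1}
  -- column order iso is succAbove
  have hcol : ∀ (b : Fin (e+1)) (h : (Finset.univ.erase b).card = e + 1 - 1)
      (c : Fin (e + 1 - 1)),
      (((Finset.univ.erase b).orderIsoOfFin h c : Fin (e+1))) = b.succAbove c := by
    intro b h c
    rw [Finset.coe_orderIsoOfFin_apply]
    rw [← Finset.orderEmbOfFin_unique h (f := b.succAbove)
      (fun x => by simp [Fin.succAbove_ne]) (Fin.strictMono_succAbove b)]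
  -- row function and full matrix
  set Rw : ι → Fin N → Fin (e+1) → Fin N := fun S j =>
    Fin.snoc (fun a : Fin e => ((S.val.orderIsoOfFin S.property a : Fin N))) j with hRw
  set M : ι → Fin N → Matrix (Fin (e+1)) (Fin (e+1)) ℝ := fun S j =>
    Matrix.of fun a b => V (Rw S j a) b with hM
  -- determinant expansion
  have hdet : ∀ (S : ι) (j : Fin N),
      Matrix.det (M S j) = ∑ b : Fin (e+1), (-1:ℝ)^(e + (b:ℕ)) * V j b * Q S b := by
    intro S j
    rw [Matrix.det_succ_row (M S j) (Fin.last e)]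
    refine Finset.sum_congr rfl fun b _ => ?_
    have h1 : M S j (Fin.last e) b = V j b := by
      show V (Rw S j (Fin.last e)) b = V j b
      rw [hRw]; simp
    have h2 : Matrix.det ((M S j).submatrix (Fin.last e).succAbove b.succAbove) = Q S b := by
      rw [hQ S b]
      congr 1
      funext a c
      simp only [Matrix.submatrix_apply]
      show V (Rw S j ((Fin.last e).succAbove a)) (b.succAbove c) = _
      rw [Fin.succAbove_last, hRw]
      simp only [Fin.snoc_castSucc]
      rw [Matrix.of_apply]
      congr 1
      exact (hcol b _ c).symm
    rw [h1, h2, Fin.val_last]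
  -- the twisted dot product
  set dotv : ι → Fin N → ℝ := fun S j => ∑ b : Fin (e+1), Q S b * ((-1:ℝ)^(b:ℕ) * V j b)
    with hdotv
  have hdot_det : ∀ (S : ι) (j : Fin N), dotv S j = (-1:ℝ)^e * Matrix.det (M S j) := by
    intro S j
    rw [hdet, Finset.mul_sum]
    refine Finset.sum_congr rfl fun b _ => ?_
    have key : ((-1:ℝ))^(e + (b:ℕ)) = (-1:ℝ)^e * (-1:ℝ)^(b:ℕ) := pow_add _ _ _
    have key2 : ((-1:ℝ))^e * (-1:ℝ)^e = 1 := by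
      rw [← pow_add, ← two_mul, pow_mul]; norm_num
    show Q S b * ((-1:ℝ)^(b:ℕ) * V j b) = (-1:ℝ)^e * ((-1:ℝ)^(e + (b:ℕ)) * V j b * Q S b)
    rw [key]
    linear_combination (-(Q S b * V j b * (-1:ℝ)^(b:ℕ))) * key2
  -- Claim A : j ∈ S → det = 0
  have hA : ∀ (S : ι) (j : Fin N), j ∈ S.val → dotv S j = 0 := by
    intro S j hj
    rw [hdot_det]
    have : Matrix.det (M S j) = 0 := by
      set a0 := (S.val.orderIsoOfFin S.property).symm ⟨j, hj⟩ with ha0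
      apply Matrix.det_zero_of_row_eq (i := Fin.castSucc a0) (j := Fin.last e)
      · exact Fin.ne_of_lt (Fin.castSucc_lt_last a0)
      · funext b
        show V (Rw S j (Fin.castSucc a0)) b = V (Rw S j (Fin.last e)) b
        rw [hRw]
        simp only [Fin.snoc_castSucc, Fin.snoc_last]
        congr 1
        show ((S.val.orderIsoOfFin S.property a0 : Fin N)) = j
        rw [ha0, OrderIso.apply_symm_apply]
    rw [this, mul_zero]
  -- Claim B : j ∉ S → dot ≠ 0
  have hB : ∀ (S : ι) (j : Fin N), j ∉ S.val → dotv S j ≠ 0 := by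
    intro S j hj
    rw [hdot_det]
    apply mul_ne_zero
    · exact pow_ne_zero _ (by norm_num)
    · have hRinj : Function.Injective (Rw S j) := by
        intro x y hxy
        have hmem : ∀ a : Fin e, Rw S j (Fin.castSucc a) ∈ S.val := by
          intro a
          rw [hRw]
          simp only [Fin.snoc_castSucc]
          exact (S.val.orderIsoOfFin S.property a).2
        have hlast : Rw S j (Fin.last e) = j := by rw [hRw]; simp
        induction x using Fin.lastCases with
        | last =>
          induction y using Fin.lastCases with
          | last => rfl
          | cast y =>
            exfalso; apply hj
            rw [hlast] at hxy; rw [hxy]; exact hmem y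
        | cast x =>
          induction y using Fin.lastCases with
          | last =>
            exfalso; apply hj
            rw [hlast] at hxy; rw [← hxy]; exact hmem x
          | cast y =>
            have : (S.val.orderIsoOfFin S.property x : Fin N)
                = (S.val.orderIsoOfFin S.property y : Fin N) := by
              have h1 := hxy
              rw [hRw] at h1
              simpa using h1
            have := (S.val.orderIsoOfFin S.property).injective
              (Subtype.coe_injective this)
            rw [this]
      have : M S j = Matrix.of fun a b : Fin (e+1) => v b ^ (α (Rw S j a)) := by
        funext a b
        rw [hM]
        exact hV _ _
      rw [this]
      exact genVandermonde_det_ne_zero _ (hα_inj.comp hRinj) v hv_pos hv_inj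
  -- twisted rows
  set Wv : Fin N → Fin (e+1) → ℝ := fun j b => (-1:ℝ)^(b:ℕ) * V j b with hWv
  have hdotv_eq : ∀ (S : ι) (j : Fin N), (∑ b, Q S b * Wv j b) = dotv S j := by
    intro S j; rfl
  -- Linear independence
  have hLI : LinearIndependent ℝ (fun S : ι => Lin (Q S) ^ t) := by
    rw [Fintype.linearIndependent_iff]
    intro g hg S'
    -- complement
    have hCcard : (S'.valᶜ).card = t := by
      have := S'.2
      rw [Finset.card_compl, this]
      simp only [Fintype.card_fin]
      omega
    set τ := (S'.valᶜ).orderIsoOfFin hCcard with hτ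
    set ws : List (Fin (e+1) → ℝ) := List.ofFn (fun k : Fin t => Wv (τ k)) with hws
    have hlen : ws.length = t := by rw [hws, List.length_ofFn]
    have hop : ∀ S : ι, ∃ D : ℕ, 0 < D ∧ opList ws (Lin (Q S) ^ t) =
        ((D : ℝ) * (∏ k : Fin t, dotv S (τ k))) • (1 : MvPolynomial (Fin (e+1)) ℝ) := by
      intro S
      obtain ⟨D, hD, hDeq⟩ := opList_pow (Q S) ws 0
      refine ⟨D, hD, ?_⟩
      have hlen0 : ws.length + 0 = t := by omega
      have h0 : Lin (Q S) ^ (ws.length + 0) = Lin (Q S) ^ t := by rw [hlen0]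
      rw [← h0, hDeq, pow_zero]
      congr 2
      rw [hws, List.map_ofFn, List.prod_ofFn]
      exact Finset.prod_congr rfl fun k _ => hdotv_eq S (τ k)
    choose D hDpos hDeq using hop
    have happly := congrArg (opList ws) hg
    rw [map_sum, map_zero] at happly
    have happly2 : ∑ S : ι, (g S * ((D S : ℝ) * ∏ k : Fin t, dotv S (τ k))) •
        (1 : MvPolynomial (Fin (e+1)) ℝ) = 0 := by
      rw [← happly]
      refine Finset.sum_congr rfl fun S _ => ?_
      rw [map_smul, hDeq S, smul_smul]
    rw [← Finset.sum_smul, smul_eq_C_mul, mul_one] at happly2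
    have hsum0 : ∑ S : ι, g S * ((D S : ℝ) * ∏ k : Fin t, dotv S (τ k)) = 0 := by
      have := MvPolynomial.C_injective (Fin (e+1)) ℝ
      apply this
      rw [happly2, map_zero]
    rw [Finset.sum_eq_single S'] at hsum0
    · -- g S' * (D * prod) = 0 with prod ≠ 0
      have hprod : (∏ k : Fin t, dotv S' (τ k)) ≠ 0 := by
        rw [Finset.prod_ne_zero_iff]
        intro k _
        apply hB
        exact Finset.mem_compl.1 (τ k).2
      have hD' : (D S' : ℝ) ≠ 0 := Nat.cast_ne_zero.2 (hDpos S').ne'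
      rcases mul_eq_zero.1 hsum0 with h | h
      · exact h
      · exact absurd h (mul_ne_zero hD' hprod)
    · intro S _ hSS
      -- S ≠ S' : some factor vanishes
      have hex : ∃ j, j ∈ S.val ∧ j ∉ S'.val := by
        by_contra h
        push_neg at h
        have hsub : S.val ⊆ S'.val := h
        have : S.val = S'.val := Finset.eq_of_subset_of_card_le hsub (by rw [S.2, S'.2])
        exact hSS (Subtype.ext this)
      obtain ⟨j, hjS, hjS'⟩ := hex
      have hjc : j ∈ S'.valᶜ := Finset.mem_compl.2 hjS'
      set k0 := τ.symm ⟨j, hjc⟩ with hk0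
      have : dotv S (τ k0) = 0 := by
        rw [hk0, OrderIso.apply_symm_apply]
        exact hA S j hjS
      rw [Finset.prod_eq_zero (Finset.mem_univ k0) this]
      ring
    · intro h
      exact absurd (Finset.mem_univ S') h
  -- homogeneity
  have hhom : ∀ S : ι, Lin (Q S) ^ t ∈ homogeneousSubmodule (Fin (e+1)) ℝ t := by
    intro S
    rw [mem_homogeneousSubmodule]
    have h1 : (Lin (Q S)).IsHomogeneous 1 := by
      apply IsHomogeneous.sum
      intro i _
      exact (isHomogeneous_X ℝ i).C_mul _
    simpa using h1.pow t
  -- dimension count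
  have hcount : Fintype.card ι = (t + e).choose e := by
    rw [Fintype.card_finset_len, Fintype.card_fin]
    rfl
  haveI hfinset : Fintype ↥{d : Fin (e+1) →₀ ℕ | d.degree = t} := by
    apply Fintype.ofEquiv _ ((Sym.equivNatSum (Fin (e+1)) t).trans
      (Equiv.subtypeEquivRight (fun P => by rfl)))
  have hfr : Module.finrank ℝ (homogeneousSubmodule (Fin (e+1)) ℝ t) = (t + e).choose e := by
    rw [MvPolynomial.homogeneousSubmodule_eq_finsupp_supported]
    have hb := Module.finrank_eq_card_basis
      (MvPolynomial.basisRestrictSupport ℝ {d : Fin (e+1) →₀ ℕ | d.degree = t})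
    haveI : Fintype {P : Fin (e+1) →₀ ℕ // (P.sum fun _ => id) = t} :=
      Fintype.ofEquiv _ (Sym.equivNatSum (Fin (e+1)) t)
    have hcard2 : Fintype.card ↥{d : Fin (e+1) →₀ ℕ | d.degree = t} = (t + e).choose e := by
      have c1 : Fintype.card ↥{d : Fin (e+1) →₀ ℕ | d.degree = t}
          = Fintype.card (Sym (Fin (e+1)) t) :=
        Fintype.card_congr (((Sym.equivNatSum (Fin (e+1)) t).trans
          (Equiv.subtypeEquivRight (fun P => Iff.rfl))).symm)
      rw [c1, Sym.card_sym_eq_choose, Fintype.card_fin]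
      have h1 : e + 1 + t - 1 = t + e := by omega
      have h2 : t + e - t = e := by omega
      rw [h1, ← Nat.choose_symm (Nat.le_add_right t e), h2]
    exact hb.trans hcard2
  -- package into the submodule
  set H := homogeneousSubmodule (Fin (e+1)) ℝ t with hH
  set fsub : ι → H := fun S => ⟨Lin (Q S) ^ t, hhom S⟩ with hfsub
  have hcomp : (H.subtype) ∘ fsub = fun S : ι => Lin (Q S) ^ t := rfl
  have hLIsub : LinearIndependent ℝ fsub := by
    apply LinearIndependent.of_comp H.subtype
    rw [hcomp]
    exact hLI
  haveI : Nonempty ι := by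
    obtain ⟨s, -, hcard⟩ := Finset.exists_subset_card_eq
      (s := (Finset.univ : Finset (Fin N))) (n := e + 1 - 1)
      (by simp only [Finset.card_univ, Fintype.card_fin]; omega)
    exact ⟨⟨s, hcard⟩⟩
  have hspan : Submodule.span ℝ (Set.range fsub) = ⊤ :=
    hLIsub.span_eq_top_of_card_eq_finrank (by rw [hcount, hfr])
  constructor
  · exact hLI
  · have := congrArg (Submodule.map H.subtype) hspan
    rw [Submodule.map_span, Submodule.map_top, Submodule.range_subtype] at this
    rw [← Set.range_comp, hcomp] at this
    exact this
end

section
/- Let q_1, …, q_n be unit vectors in ℝ^d and t ≥ 1. If the homogeneous polynomials x ↦ (q_j · x)^t, j = 1, …, n, span Hom_t(ℝ^d), then there exist weights ω_1, …, ω_n ∈ ℝ such that {(q_j, ω_j)}_{j=1}^n is a cubature for Hom_t(S^{d−1}). -/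
/-!
Under the apolar pairing `⟨p, r⟩ = ∑ₘ m! · coeff m p · coeff m r`, which is positive definite,
`⟨p, (a · x)^t⟩ = t! · p(a)` for every `p ∈ Hom_t`. So a `p ∈ Hom_t` vanishing at all the `q j` is
orthogonal to the span of the `(q j · x)^t`, which is `Hom_t` and contains `p`; hence `p = 0`. The
evaluations at the `q j` are therefore jointly injective on `Hom_t`, and every linear functional
on `Hom_t`, integration over the sphere in particular, is a linear combination of them.
-/

open MvPolynomial MeasureTheory

/-- The unit sphere `S^{d-1}` in `ℝ^d`. -/
noncomputable def unitSphere (d : ℕ) := Metric.sphere (0 : EuclideanSpace ℝ (Fin d)) 1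

/-- A linear isometry (element of `O(d)`) maps the unit sphere to itself. -/
noncomputable def sphereMap (d : ℕ) (f : EuclideanSpace ℝ (Fin d) ≃ₗᵢ[ℝ] EuclideanSpace ℝ (Fin d))
    (x : unitSphere d) : unitSphere d :=
  ⟨f x, by
    have hx := x.2
    simp only [unitSphere, mem_sphere_iff_norm, sub_zero] at hx ⊢
    rw [f.norm_map]; exact hx⟩

open scoped Nat

namespace MvPolynomial

section Apolar

variable {σ R : Type*} [CommSemiring R]

noncomputable def apolarPairing (p : MvPolynomial σ R) : MvPolynomial σ R →ₗ[R] R :=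
  ∑ m ∈ p.support, (coeff m p * m.prod fun _ k => (k ! : R)) • lcoeff R m

theorem apolarPairing_apply (p r : MvPolynomial σ R) :
    apolarPairing p r = ∑ m ∈ p.support, coeff m p * (m.prod fun _ k => (k ! : R)) * coeff m r := by
  simp [apolarPairing, LinearMap.sum_apply]

theorem apolarPairing_self_pos {K : Type*} [Field K] [LinearOrder K] [IsStrictOrderedRing K]
    {p : MvPolynomial σ K} (hp : p ≠ 0) : 0 < apolarPairing p p := by
  rw [apolarPairing_apply]
  obtain ⟨m₀, hm₀⟩ := support_nonempty.2 hp
  refine Finset.sum_pos' (fun m _ => ?_) ⟨m₀, hm₀, ?_⟩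
  · rw [mul_right_comm]
    exact mul_nonneg (mul_self_nonneg _) (Finset.prod_nonneg fun _ _ => by positivity)
  · rw [mul_right_comm]
    exact mul_pos (mul_self_pos.2 (mem_support_iff.1 hm₀))
      (Finset.prod_pos fun _ _ => by positivity)

theorem apolarPairing_linearForm_pow [Fintype σ] {p : MvPolynomial σ R} {t : ℕ}
    (hp : p.IsHomogeneous t) (a : σ → R) :
    apolarPairing p ((∑ i, a i • X i) ^ t) = t ! * eval a p := by
  rw [apolarPairing_apply, eval_eq, Finset.mul_sum]
  refine Finset.sum_congr rfl fun m hm => ?_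
  have hdeg : m.sum (fun _ k => k) = t := by
    simpa [Finsupp.weight_apply] using hp (mem_support_iff.1 hm)
  rw [coeff_linearCombination_X_pow_of_fintype, if_pos hdeg]
  have hfac : ((m.prod fun _ k => k ! : ℕ) : R) * m.multinomial = t ! := by
    rw [← hdeg]; exact_mod_cast congrArg (Nat.cast : ℕ → R) (Nat.multinomial_spec m.support m)
  rw [← hfac]
  simp only [Finsupp.prod, Nat.cast_prod]
  ring

end Apolar

theorem eq_zero_of_mem_span_linearForm_pow_of_eval_eq_zero {σ ι K : Type*} [Fintype σ] [Field K]
    [LinearOrder K] [IsStrictOrderedRing K] {a : ι → σ → K} {t : ℕ} {p : MvPolynomial σ K}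
    (hp : p.IsHomogeneous t)
    (hspan : p ∈ Submodule.span K (Set.range fun j => (∑ i, a j i • X i) ^ t))
    (heval : ∀ j, eval (a j) p = 0) : p = 0 := by
  by_contra hp0
  have hker : Submodule.span K (Set.range fun j => (∑ i, a j i • X i) ^ t) ≤
      LinearMap.ker (apolarPairing p) := by
    rw [Submodule.span_le]
    rintro _ ⟨j, rfl⟩
    simp [apolarPairing_linearForm_pow hp, heval j]
  exact (apolarPairing_self_pos hp0).ne' (hker hspan)

theorem integrable_eval_comp {X σ : Type*} [TopologicalSpace X] [CompactSpace X]
    [MeasurableSpace X] [OpensMeasurableSpace X] (μ : Measure X) [IsFiniteMeasure μ]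
    {v : X → σ → ℝ} (hv : Continuous v) (p : MvPolynomial σ ℝ) :
    Integrable (fun x => eval (v x) p) μ :=
  ((continuous_eval p).comp hv).integrable_of_hasCompactSupport
    (HasCompactSupport.of_compactSpace _)

noncomputable def integralEvalₗ {X σ : Type*} [TopologicalSpace X] [CompactSpace X]
    [MeasurableSpace X] [OpensMeasurableSpace X] (μ : Measure X) [IsFiniteMeasure μ]
    {v : X → σ → ℝ} (hv : Continuous v) : MvPolynomial σ ℝ →ₗ[ℝ] ℝ where
  toFun p := ∫ x, eval (v x) p ∂μ
  map_add' p r := by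
    simp only [map_add]
    exact integral_add (integrable_eval_comp μ hv p) (integrable_eval_comp μ hv r)
  map_smul' c p := by
    simp only [smul_eval, RingHom.id_apply, smul_eq_mul]
    exact integral_const_mul c _

end MvPolynomial

theorem Submodule.exists_eq_sum_mul_of_forall_apply_eq_zero {ι K E : Type*} [Fintype ι] [Field K]
    [AddCommGroup E] [Module K E] (V : Submodule K E) (L : ι → E →ₗ[K] K) (Λ : E →ₗ[K] K)
    (hL : ∀ x ∈ V, (∀ j, L j x = 0) → Λ x = 0) :
    ∃ ω : ι → K, ∀ x ∈ V, Λ x = ∑ j, ω j * L j x := by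
  have hker : ⨅ j, LinearMap.ker ((L j).domRestrict V) ≤ LinearMap.ker (Λ.domRestrict V) := by
    intro x hx
    simp only [Submodule.mem_iInf, LinearMap.mem_ker, LinearMap.domRestrict_apply] at hx ⊢
    exact hL x x.2 hx
  obtain ⟨ω, hω⟩ :=
    (Submodule.mem_span_range_iff_exists_fun K).1 (mem_span_of_iInf_ker_le_ker hker)
  refine ⟨ω, fun x hx => ?_⟩
  simpa using (LinearMap.congr_fun hω ⟨x, hx⟩).symm

instance (d : ℕ) : CompactSpace (unitSphere d) :=
  isCompact_iff_compactSpace.1 (isCompact_sphere _ _)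

theorem continuous_unitSphere_coords (d : ℕ) :
    Continuous fun (x : unitSphere d) (i : Fin d) => (x : EuclideanSpace ℝ (Fin d)) i :=
  (PiLp.continuous_ofLp 2 _).comp continuous_subtype_val

theorem cubature_of_frame_general (d n t : ℕ)
    (q : Fin n → EuclideanSpace ℝ (Fin d))
    (hspan : Submodule.span ℝ
        (Set.range fun j => (∑ i, MvPolynomial.C (q j i) * MvPolynomial.X i) ^ t) =
      MvPolynomial.homogeneousSubmodule (Fin d) ℝ t)
    (σ : Measure (unitSphere d)) [IsProbabilityMeasure σ] :
    ∃ ω : Fin n → ℝ, ∀ p ∈ MvPolynomial.homogeneousSubmodule (Fin d) ℝ t,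
      ∫ x : unitSphere d,
          MvPolynomial.eval (fun i => (x : EuclideanSpace ℝ (Fin d)) i) p ∂σ =
        ∑ j, ω j * MvPolynomial.eval (fun i => q j i) p := by
  simp only [← smul_eq_C_mul] at hspan
  refine Submodule.exists_eq_sum_mul_of_forall_apply_eq_zero _
    (fun j => (aeval fun i => q j i).toLinearMap) (integralEvalₗ σ (continuous_unitSphere_coords d))
    fun p hp heval => ?_
  have hp0 : p = 0 := eq_zero_of_mem_span_linearForm_pow_of_eval_eq_zero
    ((mem_homogeneousSubmodule t p).1 hp) (hspan ▸ hp) (by simpa using heval)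
  rw [hp0, map_zero]

/-- If the polynomials `x ↦ (q j ⬝ x)^t` span `Hom_t(ℝ^d)`, then there are
weights `ω j` such that `{(q j, ω j)}` is a cubature for `Hom_t(S^{d-1})` with respect to the
rotation-invariant probability measure on the sphere. -/
theorem cubature_of_frame (d n t : ℕ) (ht : 1 ≤ t)
    (q : Fin n → EuclideanSpace ℝ (Fin d)) (hq : ∀ j, ‖q j‖ = 1)
    (hspan : Submodule.span ℝ
        (Set.range fun j => (∑ i, MvPolynomial.C (q j i) * MvPolynomial.X i) ^ t) =
      MvPolynomial.homogeneousSubmodule (Fin d) ℝ t)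
    (σ : Measure (unitSphere d)) [IsProbabilityMeasure σ]
    (hinv : ∀ f : EuclideanSpace ℝ (Fin d) ≃ₗᵢ[ℝ] EuclideanSpace ℝ (Fin d),
      Measure.map (sphereMap d f) σ = σ) :
    ∃ ω : Fin n → ℝ, ∀ p ∈ MvPolynomial.homogeneousSubmodule (Fin d) ℝ t,
      ∫ x : unitSphere d,
          MvPolynomial.eval (fun i => (x : EuclideanSpace ℝ (Fin d)) i) p ∂σ =
        ∑ j, ω j * MvPolynomial.eval (fun i => q j i) p :=
  cubature_of_frame_general d n t q hspan σ
end

section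
/- Let q_1, …, q_n be unit vectors in ℝ^d and t ≥ 1. If there exist weights ω_1, …, ω_n ∈ ℝ such that {(q_j, ω_j)}_{j=1}^n is a cubature for Hom_{2t}(S^{d−1}), then the homogeneous polynomials x ↦ (q_j · x)^t, j = 1, …, n, span Hom_t(ℝ^d). -/
/-!
If the forms `(q j · x) ^ t` did not span `Hom_t`, some linear functional `L` on polynomials
would vanish on all of them but not on `Hom_t`. Under the apolar pairing `L` is represented by a
nonzero `p ∈ Hom_t` with `p a = L ((a · x) ^ t)`, so `p` vanishes at every node `q j`. The cubature
rule applied to `p ^ 2 ∈ Hom_{2t}` gives `∫ p ^ 2 dσ = ∑ ω j * p (q j) ^ 2 = 0`. The orthogonal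
group acts transitively on the compact sphere, so an invariant probability measure charges every
nonempty open set; hence the continuous function `p ^ 2` vanishes on the sphere, and `p = 0` by
homogeneity.
-/

open MvPolynomial MeasureTheory

theorem Finset.mem_finsuppAntidiag_univ_iff {σ : Type*} [Fintype σ] [DecidableEq σ]
    {s : σ →₀ ℕ} {n : ℕ} : s ∈ finsuppAntidiag univ n ↔ s.degree = n := by
  simp [Finsupp.degree_eq_sum]

namespace MvPolynomial

variable {R σ : Type*}

theorem IsHomogeneous.eval_smul [CommSemiring R] {p : MvPolynomial σ R} {n : ℕ}
    (hp : p.IsHomogeneous n) (c : R) (x : σ → R) : eval (c • x) p = c ^ n * eval x p := by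
  rw [eval_eq, eval_eq, Finset.mul_sum]
  refine Finset.sum_congr rfl fun s hs => ?_
  have hdeg : ∑ i ∈ s.support, s i = n := (hp.degree_eq_sum_deg_support hs).symm
  simp only [Pi.smul_apply, smul_eq_mul, mul_pow, Finset.prod_mul_distrib,
    Finset.prod_pow_eq_pow_sum, hdeg]
  ring

variable [Fintype σ]

theorem isHomogeneous_sum_C_mul_X_pow [CommSemiring R] (a : σ → R) (n : ℕ) :
    ((∑ i, C (a i) * X i : MvPolynomial σ R) ^ n).IsHomogeneous n := by
  simpa using (IsHomogeneous.sum _ _ 1 fun i _ => isHomogeneous_C_mul_X (a i) i).pow n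

section Apolar

variable [DecidableEq σ] [CommSemiring R]

theorem IsHomogeneous.map_eq_sum_coeff_mul {p : MvPolynomial σ R} {n : ℕ}
    (hp : p.IsHomogeneous n) (L : Module.Dual R (MvPolynomial σ R)) :
    L p = ∑ s ∈ Finset.finsuppAntidiag Finset.univ n, coeff s p * L (monomial s 1) := by
  calc L p = L (∑ s ∈ p.support, coeff s p • monomial s 1) := by
          congr 1
          conv_lhs => rw [p.as_sum]
          simp only [smul_monomial, smul_eq_mul, mul_one]
    _ = ∑ s ∈ p.support, coeff s p * L (monomial s 1) := by
          simp only [map_sum, map_smul, smul_eq_mul]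
    _ = _ := by
          refine Finset.sum_subset (fun s hs => ?_) (fun s _ hs => ?_)
          · rw [Finset.mem_finsuppAntidiag_univ_iff, Finsupp.degree_apply]
            exact (hp.degree_eq_sum_deg_support hs).symm
          · rw [notMem_support_iff.mp hs, zero_mul]

noncomputable def apolarRepresentative (L : Module.Dual R (MvPolynomial σ R)) (n : ℕ) :
    MvPolynomial σ R :=
  ∑ s ∈ Finset.finsuppAntidiag Finset.univ n, monomial s (s.multinomial * L (monomial s 1))

theorem apolarRepresentative_mem_homogeneousSubmodule (L : Module.Dual R (MvPolynomial σ R))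
    (n : ℕ) : apolarRepresentative L n ∈ homogeneousSubmodule σ R n :=
  Submodule.sum_mem _ fun _ hs =>
    isHomogeneous_monomial _ (Finset.mem_finsuppAntidiag_univ_iff.mp hs)

theorem coeff_apolarRepresentative (L : Module.Dual R (MvPolynomial σ R)) (n : ℕ)
    (s : σ →₀ ℕ) : coeff s (apolarRepresentative L n) =
      if s.degree = n then s.multinomial * L (monomial s 1) else 0 := by
  simp [apolarRepresentative, coeff_sum, coeff_monomial, ← Finset.mem_finsuppAntidiag_univ_iff]

theorem eval_apolarRepresentative (L : Module.Dual R (MvPolynomial σ R)) (n : ℕ) (a : σ → R) :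
    eval a (apolarRepresentative L n) = L ((∑ i, C (a i) * X i) ^ n) := by
  rw [(isHomogeneous_sum_C_mul_X_pow a n).map_eq_sum_coeff_mul, apolarRepresentative, map_sum]
  refine Finset.sum_congr rfl fun s hs => ?_
  simp_rw [← smul_eq_C_mul]
  rw [eval_monomial, coeff_linearCombination_X_pow_of_fintype,
    if_pos (show s.sum (fun _ m ↦ m) = n from Finset.mem_finsuppAntidiag_univ_iff.mp hs)]
  ring

theorem map_eq_zero_of_apolarRepresentative_eq_zero [NoZeroDivisors R] [CharZero R]
    {L : Module.Dual R (MvPolynomial σ R)} {n : ℕ} (hL : apolarRepresentative L n = 0)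
    {p : MvPolynomial σ R} (hp : p.IsHomogeneous n) : L p = 0 := by
  rw [hp.map_eq_sum_coeff_mul L]
  refine Finset.sum_eq_zero fun s hs => ?_
  have hcoeff := congrArg (coeff s) hL
  rw [coeff_apolarRepresentative, if_pos (Finset.mem_finsuppAntidiag_univ_iff.mp hs),
    coeff_zero] at hcoeff
  have hmult : (s.multinomial : R) ≠ 0 := Nat.cast_ne_zero.mpr (Nat.multinomial_pos _ _).ne'
  rw [(mul_eq_zero.mp hcoeff).resolve_left hmult, mul_zero]

end Apolar

theorem span_sum_C_mul_X_pow_eq_homogeneousSubmodule {K ι : Type*} [Field K] [CharZero K]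
    (q : ι → σ → K) (n : ℕ)
    (h : ∀ p ∈ homogeneousSubmodule σ K n, (∀ j, eval (q j) p = 0) → p = 0) :
    Submodule.span K (Set.range fun j => (∑ i, C (q j i) * X i) ^ n) =
      homogeneousSubmodule σ K n := by
  classical
  refine le_antisymm (Submodule.span_le.mpr ?_) ?_
  · rintro _ ⟨j, rfl⟩
    exact isHomogeneous_sum_C_mul_X_pow (q j) n
  · rw [← Subspace.dualAnnihilator_le_dualAnnihilator_iff]
    intro L hL
    rw [Submodule.mem_dualAnnihilator] at hL ⊢
    have hrep : apolarRepresentative L n = 0 :=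
      h _ (apolarRepresentative_mem_homogeneousSubmodule L n) fun j => by
        rw [eval_apolarRepresentative]
        exact hL _ (Submodule.subset_span ⟨j, rfl⟩)
    exact fun p hp => map_eq_zero_of_apolarRepresentative_eq_zero hrep hp

end MvPolynomial

theorem Continuous.eq_zero_of_integral_mul_self_eq_zero {X : Type*} [TopologicalSpace X]
    [CompactSpace X] [MeasurableSpace X] [OpensMeasurableSpace X] {μ : Measure X}
    [IsFiniteMeasure μ] [μ.IsOpenPosMeasure] {g : X → ℝ} (hg : Continuous g)
    (h : ∫ x, g x * g x ∂μ = 0) : g = 0 := by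
  funext x
  by_contra hx
  have := (hg.mul hg).integral_pos_of_hasCompactSupport_nonneg_nonzero (μ := μ)
    (.of_compactSpace _) (fun x => mul_self_nonneg (g x)) (mul_self_ne_zero.mpr hx)
  exact this.ne' h

namespace unitSphere

variable {d : ℕ}

theorem norm_eq_one (x : unitSphere d) : ‖(x : EuclideanSpace ℝ (Fin d))‖ = 1 := by
  simpa [unitSphere] using x.2

instance : CompactSpace (unitSphere d) :=
  isCompact_iff_compactSpace.mp (isCompact_sphere _ _)

noncomputable instance :
    MulAction (EuclideanSpace ℝ (Fin d) ≃ₗᵢ[ℝ] EuclideanSpace ℝ (Fin d)) (unitSphere d) where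
  smul := sphereMap d
  one_smul _ := rfl
  mul_smul _ _ _ := rfl

instance :
    ContinuousConstSMul (EuclideanSpace ℝ (Fin d) ≃ₗᵢ[ℝ] EuclideanSpace ℝ (Fin d))
      (unitSphere d) where
  continuous_const_smul f := (f.continuous.comp continuous_subtype_val).subtype_mk _

instance :
    MulAction.IsPretransitive (EuclideanSpace ℝ (Fin d) ≃ₗᵢ[ℝ] EuclideanSpace ℝ (Fin d))
      (unitSphere d) where
  exists_smul_eq x y := ⟨Submodule.reflection (ℝ ∙ ((x : EuclideanSpace ℝ (Fin d)) - y))ᗮ,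
    Subtype.ext (Submodule.reflection_sub (by rw [norm_eq_one, norm_eq_one]))⟩

theorem isOpenPosMeasure_of_map_sphereMap_eq (σ : Measure (unitSphere d)) [NeZero σ]
    (hinv : ∀ f : EuclideanSpace ℝ (Fin d) ≃ₗᵢ[ℝ] EuclideanSpace ℝ (Fin d),
      Measure.map (sphereMap d f) σ = σ) :
    σ.IsOpenPosMeasure := by
  have : SMulInvariantMeasure (EuclideanSpace ℝ (Fin d) ≃ₗᵢ[ℝ] EuclideanSpace ℝ (Fin d))
      (unitSphere d) σ := ⟨fun f s hs => by
    rw [← Measure.map_apply (continuous_const_smul f).measurable hs]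
    exact congrArg (· s) (hinv f)⟩
  exact ⟨fun U hU hne => (measure_isOpen_pos_of_smulInvariant_of_compact_ne_zero
    (EuclideanSpace ℝ (Fin d) ≃ₗᵢ[ℝ] EuclideanSpace ℝ (Fin d)) isCompact_univ
    (NeZero.ne' _).symm hU hne).ne'⟩

theorem exists_eq_smul [Nonempty (unitSphere d)] (z : EuclideanSpace ℝ (Fin d)) :
    ∃ c : ℝ, ∃ x : unitSphere d, z = c • (x : EuclideanSpace ℝ (Fin d)) := by
  by_cases hz : z = 0
  · exact ⟨0, Classical.arbitrary _, by rw [hz, zero_smul]⟩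
  · refine ⟨‖z‖, ⟨‖z‖⁻¹ • z, ?_⟩, ?_⟩
    · simp [unitSphere, norm_smul, hz]
    · simp [smul_smul, hz]

end unitSphere

theorem MvPolynomial.IsHomogeneous.eq_zero_of_forall_unitSphere_eval_eq_zero {d n : ℕ}
    [Nonempty (unitSphere d)] {p : MvPolynomial (Fin d) ℝ} (hp : p.IsHomogeneous n)
    (h : ∀ x : unitSphere d, eval (fun i => (x : EuclideanSpace ℝ (Fin d)) i) p = 0) :
    p = 0 := by
  refine hp.eq_zero_of_forall_eval_eq_zero fun z => ?_
  obtain ⟨c, x, hz⟩ := unitSphere.exists_eq_smul (WithLp.toLp 2 z)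
  have hz' : z = c • fun i => (x : EuclideanSpace ℝ (Fin d)) i := by
    funext i
    simpa using congrFun (congrArg WithLp.ofLp hz) i
  rw [hz', hp.eval_smul, h x, mul_zero]

theorem frame_of_cubature_general (d n t : ℕ)
    (q : Fin n → EuclideanSpace ℝ (Fin d))
    (σ : Measure (unitSphere d)) [IsProbabilityMeasure σ]
    (hinv : ∀ f : EuclideanSpace ℝ (Fin d) ≃ₗᵢ[ℝ] EuclideanSpace ℝ (Fin d),
      Measure.map (sphereMap d f) σ = σ)
    (hcub : ∃ ω : Fin n → ℝ, ∀ p ∈ MvPolynomial.homogeneousSubmodule (Fin d) ℝ (2 * t),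
      ∫ x : unitSphere d,
          MvPolynomial.eval (fun i => (x : EuclideanSpace ℝ (Fin d)) i) p ∂σ =
        ∑ j, ω j * MvPolynomial.eval (fun i => q j i) p) :
    Submodule.span ℝ
        (Set.range fun j => (∑ i, MvPolynomial.C (q j i) * MvPolynomial.X i) ^ t) =
      MvPolynomial.homogeneousSubmodule (Fin d) ℝ t := by
  obtain ⟨ω, hω⟩ := hcub
  have := unitSphere.isOpenPosMeasure_of_map_sphereMap_eq σ hinv
  have := nonempty_of_isProbabilityMeasure σ
  refine span_sum_C_mul_X_pow_eq_homogeneousSubmodule (fun j i => q j i) t fun p hp hpq => ?_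
  rw [mem_homogeneousSubmodule] at hp
  have hsq : ∫ x : unitSphere d, eval (fun i => (x : EuclideanSpace ℝ (Fin d)) i) p *
      eval (fun i => (x : EuclideanSpace ℝ (Fin d)) i) p ∂σ = 0 := by
    simpa [hpq] using hω (p * p) (by rw [mem_homogeneousSubmodule, two_mul]; exact hp.mul hp)
  have hcont : Continuous fun x : unitSphere d =>
      eval (fun i => (x : EuclideanSpace ℝ (Fin d)) i) p :=
    (continuous_eval p).comp (by fun_prop)
  exact hp.eq_zero_of_forall_unitSphere_eval_eq_zero
    (congrFun (hcont.eq_zero_of_integral_mul_self_eq_zero hsq))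

/-- If there are weights `ω j` such that `{(q j, ω j)}` is a cubature for
`Hom_{2t}(S^{d-1})` (with respect to the rotation-invariant probability measure on the
sphere), then the polynomials `x ↦ (q j ⬝ x)^t` span `Hom_t(ℝ^d)`. -/
theorem frame_of_cubature (d n t : ℕ) (ht : 1 ≤ t)
    (q : Fin n → EuclideanSpace ℝ (Fin d)) (hq : ∀ j, ‖q j‖ = 1)
    (σ : Measure (unitSphere d)) [IsProbabilityMeasure σ]
    (hinv : ∀ f : EuclideanSpace ℝ (Fin d) ≃ₗᵢ[ℝ] EuclideanSpace ℝ (Fin d),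
      Measure.map (sphereMap d f) σ = σ)
    (hcub : ∃ ω : Fin n → ℝ, ∀ p ∈ MvPolynomial.homogeneousSubmodule (Fin d) ℝ (2 * t),
      ∫ x : unitSphere d,
          MvPolynomial.eval (fun i => (x : EuclideanSpace ℝ (Fin d)) i) p ∂σ =
        ∑ j, ω j * MvPolynomial.eval (fun i => q j i) p) :
    Submodule.span ℝ
        (Set.range fun j => (∑ i, MvPolynomial.C (q j i) * MvPolynomial.X i) ^ t) =
      MvPolynomial.homogeneousSubmodule (Fin d) ℝ t :=
  frame_of_cubature_general d n t q σ hinv hcub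
end

section
/- Let Ω be a compact metric space with a finite Borel measure σ, let K : Ω × Ω → ℝ be a continuous symmetric kernel (K(x,y) = K(y,x)), and suppose the linear span F of {K(a, ·) : a ∈ Ω} is a finite-dimensional subspace of the continuous real-valued functions on Ω. If for points q_1, …, q_n ∈ Ω the functions K(q_1, ·), …, K(q_n, ·) span F, then there exist weights ω_1, …, ω_n ∈ ℝ such that ∫_Ω f dσ = Σ_{j=1}^n ω_j f(q_j) for all f ∈ F. -/
/-!
Write `K a = ∑ j, d j • K (q j)`. By symmetry of `K`, every `f` in the span `F` of the sections
`K b` then satisfies `f a = ∑ j, d j * f (q j)`, so an element of `F` vanishing at all `q j`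
vanishes identically. Hence the evaluations at the `q j` span the dual of `F`, and the integral,
a linear functional on `F` because `F` consists of continuous functions on a compact space, is a
linear combination of them.
-/

open MeasureTheory Submodule

section Kernel

variable {Ω ι : Type*} [Fintype ι] {K : Ω → Ω → ℝ}

/-- For `f = K b` this is `hd` evaluated at `b`, by the symmetry of `K`. -/
theorem apply_eq_sum_of_mem_span_range_kernel (hK : ∀ x y, K x y = K y x) {a : Ω} {q : ι → Ω}
    {d : ι → ℝ} (hd : ∑ j, d j • K (q j) = K a) {f : Ω → ℝ} (hf : f ∈ span ℝ (Set.range K)) :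
    f a = ∑ j, d j * f (q j) := by
  induction hf using span_induction with
  | mem f hf =>
    obtain ⟨b, rfl⟩ := hf
    simp only [hK b, ← hd, Finset.sum_apply, Pi.smul_apply, smul_eq_mul]
  | zero => simp
  | add f g _ _ hf hg => simp only [Pi.add_apply, hf, hg, mul_add, Finset.sum_add_distrib]
  | smul c f _ hf => simp only [Pi.smul_apply, hf, smul_eq_mul, Finset.mul_sum, mul_left_comm]

theorem eq_zero_of_mem_span_range_kernel (hK : ∀ x y, K x y = K y x) {q : ι → Ω}
    (hq : ∀ a, K a ∈ span ℝ (Set.range (K ∘ q))) {f : Ω → ℝ}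
    (hf : f ∈ span ℝ (Set.range K)) (hfq : ∀ j, f (q j) = 0) : f = 0 := by
  funext a
  obtain ⟨d, hd⟩ := (mem_span_range_iff_exists_fun ℝ).mp (hq a)
  simp [apply_eq_sum_of_mem_span_range_kernel hK hd hf, hfq]

end Kernel

theorem exists_eq_sum_mul_eval_of_separating {𝕜 Ω ι : Type*} [Field 𝕜] [Fintype ι]
    {V : Submodule 𝕜 (Ω → 𝕜)} (q : ι → Ω) (hq : ∀ f ∈ V, (∀ j, f (q j) = 0) → f = 0)
    (L : V →ₗ[𝕜] 𝕜) : ∃ ω : ι → 𝕜, ∀ f : V, L f = ∑ j, ω j * (f : Ω → 𝕜) (q j) := by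
  have hL : ⨅ j, LinearMap.ker ((LinearMap.proj (q j)).comp V.subtype) ≤ LinearMap.ker L := by
    intro f hf
    simp only [mem_iInf, LinearMap.mem_ker, LinearMap.comp_apply, LinearMap.coe_proj,
      Function.eval, subtype_apply] at hf
    simp [coe_eq_zero.mp (hq f f.2 hf)]
  obtain ⟨ω, hω⟩ := (mem_span_range_iff_exists_fun 𝕜).mp (mem_span_of_iInf_ker_le_ker hL)
  exact ⟨ω, fun f => by simp [← hω]⟩

section Integral

variable {Ω : Type*} [MeasurableSpace Ω] {σ : Measure Ω}

theorem integrable_of_mem_span {S : Set (Ω → ℝ)} (hS : ∀ g ∈ S, Integrable g σ) {f : Ω → ℝ}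
    (hf : f ∈ span ℝ S) : Integrable f σ := by
  induction hf using span_induction with
  | mem g hg => exact hS g hg
  | zero => exact integrable_zero Ω ℝ σ
  | add f g _ _ hf hg => exact hf.add hg
  | smul c f _ hf => exact hf.smul c

variable (σ) in
noncomputable def Submodule.integralₗ (V : Submodule ℝ (Ω → ℝ)) (hV : ∀ f ∈ V, Integrable f σ) :
    V →ₗ[ℝ] ℝ where
  toFun f := ∫ x, f.1 x ∂σ
  map_add' f g := integral_add (hV f f.2) (hV g g.2)
  map_smul' c f := integral_smul c f.1

end Integral

theorem cubature_of_kernel_frame_general {Ω : Type*} [MetricSpace Ω] [CompactSpace Ω]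
    [MeasurableSpace Ω] [BorelSpace Ω] (σ : Measure Ω) [IsFiniteMeasure σ]
    (K : Ω → Ω → ℝ) (hKcont : Continuous fun p : Ω × Ω => K p.1 p.2)
    (hKsym : ∀ x y, K x y = K y x)
    (F : Submodule ℝ (Ω → ℝ)) (hF : F = Submodule.span ℝ {f | ∃ a, f = K a})
    (n : ℕ) (q : Fin n → Ω)
    (hspan : Submodule.span ℝ (Set.range fun j => K (q j)) = F) :
    ∃ ω : Fin n → ℝ, ∀ f ∈ F, ∫ x, f x ∂σ = ∑ j, ω j * f (q j) := by
  have hFK : F = span ℝ (Set.range K) := by rw [hF]; congr 1; ext; simp [eq_comm]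
  have hKint : ∀ g ∈ Set.range K, Integrable g σ := by
    rintro _ ⟨a, rfl⟩
    exact (hKcont.uncurry_left a).integrable_of_hasCompactSupport (.of_compactSpace _)
  have hsep : ∀ f ∈ F, (∀ j, f (q j) = 0) → f = 0 := fun f hf =>
    eq_zero_of_mem_span_range_kernel hKsym (fun a => hspan ▸ hFK ▸ subset_span ⟨a, rfl⟩)
      (hFK ▸ hf)
  obtain ⟨ω, hω⟩ := exists_eq_sum_mul_eval_of_separating q hsep
    (F.integralₗ σ fun f hf => integrable_of_mem_span hKint (hFK ▸ hf))
  exact ⟨ω, fun f hf => hω ⟨f, hf⟩⟩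

/-- Let `Ω` be a compact metric space with a finite Borel measure `σ`, `K` a
continuous symmetric kernel whose sections `K a = K (a, ·)` span a finite-dimensional subspace
`F` of the continuous functions. If `K (q 1), …, K (q n)` span `F`, then there exist weights
`ω` such that `(q, ω)` is a cubature for `F`. -/
theorem cubature_of_kernel_frame {Ω : Type*} [MetricSpace Ω] [CompactSpace Ω]
    [MeasurableSpace Ω] [BorelSpace Ω] (σ : Measure Ω) [IsFiniteMeasure σ]
    (K : Ω → Ω → ℝ) (hKcont : Continuous fun p : Ω × Ω => K p.1 p.2)
    (hKsym : ∀ x y, K x y = K y x)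
    (F : Submodule ℝ (Ω → ℝ)) (hF : F = Submodule.span ℝ {f | ∃ a, f = K a})
    (hfd : FiniteDimensional ℝ F)
    (n : ℕ) (q : Fin n → Ω)
    (hspan : Submodule.span ℝ (Set.range fun j => K (q j)) = F) :
    ∃ ω : Fin n → ℝ, ∀ f ∈ F, ∫ x, f x ∂σ = ∑ j, ω j * f (q j) :=
  cubature_of_kernel_frame_general σ K hKcont hKsym F hF n q hspan
end

section
/- Let Ω be a compact metric space with a finite Borel measure σ whose support is all of Ω, let K : Ω × Ω → ℝ be a continuous symmetric kernel (K(x,y) = K(y,x)), and suppose the linear span F of {K(a, ·) : a ∈ Ω} is a finite-dimensional subspace of the continuous real-valued functions on Ω. Let q_1, …, q_n ∈ Ω. If there exist weights ω_1, …, ω_n ∈ ℝ such that ∫_Ω g dσ = Σ_{j=1}^n ω_j g(q_j) for every g in the linear span of the products {f·h : f, h ∈ F}, then the functions K(q_1, ·), …, K(q_n, ·) span F. -/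
open MeasureTheory

/-- Let `Ω` be a compact metric space with a finite Borel measure `σ` of full
support, `K` a continuous symmetric kernel whose sections `K a = K (a, ·)` span a
finite-dimensional subspace `F` of the continuous functions. If there exist weights `ω` such
that `(q, ω)` is a cubature for the span of the products `F ⬝ F`, then
`K (q 1), …, K (q n)` span `F`. -/
theorem kernel_frame_of_cubature {Ω : Type*} [MetricSpace Ω] [CompactSpace Ω]
    [MeasurableSpace Ω] [BorelSpace Ω] (σ : Measure Ω) [IsFiniteMeasure σ]
    (hsupp : ∀ U : Set Ω, IsOpen U → U.Nonempty → 0 < σ U)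
    (K : Ω → Ω → ℝ) (hKcont : Continuous fun p : Ω × Ω => K p.1 p.2)
    (hKsym : ∀ x y, K x y = K y x)
    (F : Submodule ℝ (Ω → ℝ)) (hF : F = Submodule.span ℝ {f | ∃ a, f = K a})
    (hfd : FiniteDimensional ℝ F)
    (n : ℕ) (q : Fin n → Ω)
    (hcub : ∃ ω : Fin n → ℝ,
      ∀ g ∈ Submodule.span ℝ {g : Ω → ℝ | ∃ f ∈ F, ∃ h ∈ F, g = fun x => f x * h x},
        ∫ x, g x ∂σ = ∑ j, ω j * g (q j)) :
    Submodule.span ℝ (Set.range fun j => K (q j)) = F := by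
  obtain ⟨ω, hω⟩ := hcub
  haveI : σ.IsOpenPosMeasure := ⟨fun U hU hne => (hsupp U hU hne).ne'⟩
  have hKa : ∀ a : Ω, Continuous (K a) := fun a => hKcont.comp (Continuous.prodMk_right a)
  have hFmem : ∀ h, h ∈ Submodule.span ℝ {f : Ω → ℝ | ∃ a, f = K a} → h ∈ F := by
    intro h hh; rw [hF]; exact hh
  have hKaF : ∀ a : Ω, K a ∈ F := fun a => hFmem _ (Submodule.subset_span ⟨a, rfl⟩)
  -- every element of F is continuous
  have hcontF : ∀ f ∈ F, Continuous f := by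
    intro f hf
    rw [hF] at hf
    induction hf using Submodule.span_induction with
    | mem g hg => obtain ⟨a, rfl⟩ := hg; exact hKa a
    | zero => exact continuous_const
    | add x y _ _ hx hy => exact hx.add hy
    | smul c x _ hx => exact hx.const_smul c
  -- products of continuous functions are integrable
  have hint : ∀ f g : Ω → ℝ, Continuous f → Continuous g →
      Integrable (fun y => f y * g y) σ := fun f g hf hg =>
    (hf.mul hg).integrable_of_hasCompactSupport (HasCompactSupport.of_compactSpace _)
  -- the cubature identity for products f * K a
  have hprod : ∀ f ∈ F, ∀ a, ∫ y, f y * K a y ∂σ = ∑ j, ω j * (f (q j) * K a (q j)) := by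
    intro f hf a
    exact hω _ (Submodule.subset_span ⟨f, hf, K a, hKaF a, rfl⟩)
  -- the kernel of the map f ↦ ∑ j, (ω j * f (q j)) • K (q j) on F is trivial
  have hker : ∀ f ∈ F, (∀ x, ∑ j, ω j * f (q j) * K (q j) x = 0) → f = 0 := by
    intro f hfF hT
    have hfc := hcontF f hfF
    have hA : ∀ a, ∫ y, f y * K a y ∂σ = 0 := by
      intro a
      rw [hprod f hfF a]
      calc ∑ j, ω j * (f (q j) * K a (q j)) = ∑ j, ω j * f (q j) * K (q j) a := by
            refine Finset.sum_congr rfl fun j _ => ?_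
            rw [hKsym a (q j)]; ring
        _ = 0 := hT a
    have hB : ∀ h ∈ F, ∫ y, f y * h y ∂σ = 0 := by
      intro h hh
      rw [hF] at hh
      induction hh using Submodule.span_induction with
      | mem g hg => obtain ⟨a, rfl⟩ := hg; exact hA a
      | zero => simp
      | add h1 h2 hh1 hh2 ih1 ih2 =>
          have H1 : Integrable (fun y => f y * h1 y) σ :=
            hint _ _ hfc (hcontF _ (hFmem _ hh1))
          have H2 : Integrable (fun y => f y * h2 y) σ :=
            hint _ _ hfc (hcontF _ (hFmem _ hh2))
          have : ∫ y, f y * (h1 + h2) y ∂σ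
              = (∫ y, f y * h1 y ∂σ) + ∫ y, f y * h2 y ∂σ := by
            simp_rw [Pi.add_apply, mul_add]
            exact integral_add H1 H2
          rw [this, ih1, ih2, add_zero]
      | smul c h hh ih =>
          have : ∫ y, f y * (c • h) y ∂σ = c * ∫ y, f y * h y ∂σ := by
            rw [← integral_const_mul]
            congr 1; funext y
            simp [mul_left_comm]
          rw [this, ih, mul_zero]
    have hff : ∫ y, f y * f y ∂σ = 0 := hB f hfF
    have hnn : 0 ≤ fun y => f y * f y := fun y => mul_self_nonneg _
    have hae : (fun y => f y * f y) =ᵐ[σ] 0 :=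
      (integral_eq_zero_iff_of_nonneg hnn (hint f f hfc hfc)).mp hff
    have heq : (fun y => f y * f y) = 0 :=
      ((hfc.mul hfc).ae_eq_iff_eq σ continuous_const).mp hae
    funext y
    exact mul_self_eq_zero.mp (congrFun heq y)
  set S := Submodule.span ℝ (Set.range fun j => K (q j)) with hS
  have hSF : S ≤ F := Submodule.span_le.mpr (by rintro _ ⟨j, rfl⟩; exact hKaF (q j))
  haveI : FiniteDimensional ℝ S := Submodule.finiteDimensional_of_le hSF
  let T : F →ₗ[ℝ] S :=
    { toFun := fun f => ⟨∑ j, (ω j * (f : Ω → ℝ) (q j)) • K (q j),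
        Submodule.sum_mem _ fun j _ =>
          Submodule.smul_mem _ _ (Submodule.subset_span ⟨j, rfl⟩)⟩
      map_add' := by
        intro f g; ext1
        simp [mul_add, add_smul, Finset.sum_add_distrib]
      map_smul' := by
        intro c f; ext1
        simp [Finset.smul_sum, smul_smul, mul_left_comm] }
  have hTinj : Function.Injective T := by
    refine (injective_iff_map_eq_zero T).mpr fun f hf => ?_
    have h0 : (∑ j, (ω j * (f : Ω → ℝ) (q j)) • K (q j)) = 0 := congrArg Subtype.val hf
    refine Subtype.ext (hker f f.2 fun x => ?_)
    simpa [Finset.sum_apply] using congrFun h0 x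
  have hd : Module.finrank ℝ F ≤ Module.finrank ℝ S :=
    LinearMap.finrank_le_finrank_of_injective hTinj
  exact Submodule.eq_of_le_of_finrank_le hSF hd
end

section
/- Let 1 ≤ k ≤ d−1, t ∈ ℕ, and let σ_{k,d} be an O(d)-invariant Borel probability measure on G_{k,d}. For any points P_1, …, P_n ∈ G_{k,d} and any real weights ω_1, …, ω_n with Σ_{j=1}^n ω_j = 1, the t-fusion frame potential satisfies Σ_{i=1}^n Σ_{j=1}^n ω_i ω_j tr(P_i P_j)^t ≥ ∫_{G_{k,d}} ∫_{G_{k,d}} tr(P R)^t dσ_{k,d}(P) dσ_{k,d}(R). -/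
/-!
The kernel `tr(PR)^t = ⟪vec P^{⊗t}, vec R^{⊗t}⟫` has a finite-dimensional feature map. By
`O(d)`-invariance of `σ` and transitivity of the `O(d)`-action on `G_{k,d}`, the function
`Q ↦ ∫ tr(QR)^t dσ(R)` is constant, so the mean feature `m = ∫ vec R^{⊗t} dσ(R)` satisfies
`⟪vec Q^{⊗t}, m⟫ = ‖m‖² = ∫∫ tr(PR)^t` for every `Q`. For `v = Σ ωᵢ vec Pᵢ^{⊗t}` with
`Σ ωᵢ = 1` this gives `⟪v, m⟫ = ‖m‖²`, hence `0 ≤ ‖v - m‖² = FFP - ∫∫ tr(PR)^t`.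

Transitivity holds because the decreasingly ordered eigenvalues of a rank-`k` projector are
`(1, …, 1, 0, …, 0)`, so two such projectors have the same spectral decomposition up to the
orthogonal eigenbasis.
-/

open Matrix MeasureTheory MvPolynomial

noncomputable instance (d : ℕ) : MeasurableSpace (Matrix (Fin d) (Fin d) ℝ) :=
  inferInstanceAs (MeasurableSpace (Fin d → Fin d → ℝ))

/-- The Grassmannian `G_{k,d}` of rank-`k` orthogonal projectors in `ℝ^{d×d}`. -/
def Grass (d k : ℕ) : Set (Matrix (Fin d) (Fin d) ℝ) :=
  {P | P.IsSymm ∧ P * P = P ∧ P.trace = k}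

lemma conj_mem_Grass {d k : ℕ} {U : Matrix (Fin d) (Fin d) ℝ}
    (hU : U ∈ Matrix.orthogonalGroup (Fin d) ℝ) {P : Matrix (Fin d) (Fin d) ℝ}
    (hP : P ∈ Grass d k) : U * P * Uᵀ ∈ Grass d k := by
  obtain ⟨hs, hi, ht⟩ := hP
  have hU2 : Uᵀ * U = 1 := by
    have := (Matrix.mem_orthogonalGroup_iff' (Fin d) ℝ).mp hU
    simpa using this
  refine ⟨?_, ?_, ?_⟩
  · unfold Matrix.IsSymm
    simp [Matrix.transpose_mul, hs.eq, Matrix.mul_assoc]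
  · calc U * P * Uᵀ * (U * P * Uᵀ) = U * P * (Uᵀ * U) * P * Uᵀ := by
          simp [Matrix.mul_assoc]
    _ = U * (P * P) * Uᵀ := by simp [hU2, Matrix.mul_assoc]
    _ = U * P * Uᵀ := by rw [hi]
  · rw [Matrix.trace_mul_cycle, hU2, Matrix.one_mul, ht]

/-- The conjugation action `P ↦ U P Uᵀ` of an orthogonal matrix `U` on the Grassmannian. -/
def conjGrass {d k : ℕ} {U : Matrix (Fin d) (Fin d) ℝ}
    (hU : U ∈ Matrix.orthogonalGroup (Fin d) ℝ) (P : Grass d k) : Grass d k :=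
  ⟨U * P.val * Uᵀ, conj_mem_Grass hU P.property⟩

/-- `σ` is an `O(d)`-invariant measure on the Grassmannian `G_{k,d}`. -/
def IsOrthInvariant {d k : ℕ} (σ : Measure (Grass d k)) : Prop :=
  ∀ U : Matrix (Fin d) (Fin d) ℝ, ∀ hU : U ∈ Matrix.orthogonalGroup (Fin d) ℝ,
    Measure.map (conjGrass hU) σ = σ

/-- `{(P j, ω j)}` is a cubature for `Hom_t(G_{k,d})` with respect to `σ`:
for every homogeneous polynomial `p` of degree `t` in the matrix entries, the integral of `p`
over the Grassmannian equals the weighted sum of point evaluations. -/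
def IsCubature {d k : ℕ} (σ : Measure (Grass d k)) {n : ℕ}
    (P : Fin n → Grass d k) (ω : Fin n → ℝ) (t : ℕ) : Prop :=
  ∀ p ∈ MvPolynomial.homogeneousSubmodule (Fin d × Fin d) ℝ t,
    ∫ Q : Grass d k, MvPolynomial.eval (fun ij => (Q : Matrix (Fin d) (Fin d) ℝ) ij.1 ij.2) p ∂σ =
      ∑ j, ω j * MvPolynomial.eval (fun ij => (P j : Matrix (Fin d) (Fin d) ℝ) ij.1 ij.2) p

open scoped InnerProductSpace

theorem integral_integral_inner_le_sum_mul_inner {X E ι : Type*} [MeasurableSpace X]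
    [NormedAddCommGroup E] [InnerProductSpace ℝ E] [CompleteSpace E] [Fintype ι]
    {μ : Measure X} [IsProbabilityMeasure μ] {φ : X → E} (hφ : Integrable φ μ)
    (hconst : ∀ x x', ∫ y, ⟪φ x, φ y⟫_ℝ ∂μ = ∫ y, ⟪φ x', φ y⟫_ℝ ∂μ)
    (x : ι → X) {ω : ι → ℝ} (hω : ∑ i, ω i = 1) :
    ∫ y, ∫ z, ⟪φ y, φ z⟫_ℝ ∂μ ∂μ ≤ ∑ i, ∑ j, ω i * ω j * ⟪φ (x i), φ (x j)⟫_ℝ := by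
  set m := ∫ y, φ y ∂μ
  have h_inner_mean (y : X) : ∫ z, ⟪φ y, φ z⟫_ℝ ∂μ = ⟪φ y, m⟫_ℝ := integral_inner hφ (φ y)
  have h_mean_sq : ∫ y, ⟪φ y, m⟫_ℝ ∂μ = ⟪m, m⟫_ℝ := by
    simp_rw [real_inner_comm m]
    exact integral_inner hφ m
  have h_inner_mean_eq (y : X) : ⟪φ y, m⟫_ℝ = ⟪m, m⟫_ℝ := by
    simp_rw [← h_mean_sq, ← h_inner_mean, hconst _ y, integral_const, probReal_univ, one_smul]
  set v := ∑ i, ω i • φ (x i)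
  have hv_sq : ⟪v, v⟫_ℝ = ∑ i, ∑ j, ω i * ω j * ⟪φ (x i), φ (x j)⟫_ℝ := by
    simp only [v, sum_inner, inner_sum, real_inner_smul_left, real_inner_smul_right]
    exact Finset.sum_congr rfl fun i _ => Finset.sum_congr rfl fun j _ => by
      rw [real_inner_comm]; ring
  have hv_m : ⟪v, m⟫_ℝ = ⟪m, m⟫_ℝ := by
    simp only [v, sum_inner, real_inner_smul_left, h_inner_mean_eq, ← Finset.sum_mul, hω, one_mul]
  calc ∫ y, ∫ z, ⟪φ y, φ z⟫_ℝ ∂μ ∂μ = ⟪m, m⟫_ℝ := by simp_rw [h_inner_mean, h_mean_sq]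
    _ ≤ ⟪v, v⟫_ℝ := by
      linarith [real_inner_self_nonneg (x := v - m), inner_sub_sub_self (𝕜 := ℝ) v m,
        real_inner_comm v m]
    _ = _ := hv_sq

/-- The vectorisation of the Kronecker power `A^{⊗t}`. -/
def tensorPowVec {m n : Type*} (t : ℕ) (A : Matrix m n ℝ) : EuclideanSpace ℝ (Fin t → m × n) :=
  WithLp.toLp 2 fun g => ∏ s, A (g s).1 (g s).2

theorem trace_mul_transpose_pow_eq_inner {m n : Type*} [Fintype m] [Fintype n] (t : ℕ)
    (A B : Matrix m n ℝ) :
    trace (A * Bᵀ) ^ t = ⟪tensorPowVec t A, tensorPowVec t B⟫_ℝ := by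
  have h_trace : trace (A * Bᵀ) = ∑ p : m × n, A p.1 p.2 * B p.1 p.2 := by
    simp [trace, mul_apply, Fintype.sum_prod_type]
  rw [h_trace, Finset.sum_pow', Fintype.piFinset_univ, PiLp.inner_apply]
  refine Finset.sum_congr rfl fun g _ => ?_
  simp [tensorPowVec, Finset.prod_mul_distrib, mul_comm]

theorem abs_apply_le_one_of_isSymm_of_mul_self {n : Type*} [Fintype n] {P : Matrix n n ℝ}
    (hs : P.IsSymm) (hi : P * P = P) (i j : n) : |P i j| ≤ 1 := by
  have h_diag (i : n) : P i i = ∑ j, P i j ^ 2 := by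
    conv_lhs => rw [← hi]
    simp only [mul_apply, sq]
    exact Finset.sum_congr rfl fun j _ => by rw [hs.apply i j]
  have h_le_diag (j : n) : P i j ^ 2 ≤ P i i := by
    rw [h_diag i]
    exact Finset.single_le_sum (f := fun j => P i j ^ 2) (fun _ _ => sq_nonneg _)
      (Finset.mem_univ j)
  have h_diag_le : P i i ≤ 1 := by nlinarith [h_le_diag i]
  exact abs_le_one_iff_mul_self_le_one.mpr (by nlinarith [h_le_diag j])

theorem trace_conj_mul_conj {n α : Type*} [Fintype n] [DecidableEq n] [CommRing α]
    {V : Matrix n n α} (hV : V ∈ orthogonalGroup n α) (Q R : Matrix n n α) :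
    trace (V * Q * Vᵀ * (V * R * Vᵀ)) = trace (Q * R) := by
  have hVV : Vᵀ * V = 1 := (mem_orthogonalGroup_iff' n α).mp hV
  rw [show V * Q * Vᵀ * (V * R * Vᵀ) = V * (Q * (Vᵀ * V) * R) * Vᵀ by simp only [mul_assoc],
    trace_mul_cycle, hVV, one_mul, mul_one]

theorem Antitone.eq_of_sum_eq_of_forall_eq_zero_or_eq_one {ι : Type*} [LinearOrder ι]
    [Fintype ι] {v w : ι → ℝ} (hv : Antitone v) (hw : Antitone w)
    (hv01 : ∀ i, v i = 0 ∨ v i = 1) (hw01 : ∀ i, w i = 0 ∨ w i = 1)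
    (hsum : ∑ i, v i = ∑ i, w i) : v = w := by
  by_contra hne
  obtain ⟨i, hi⟩ := Function.ne_iff.mp hne
  wlog hlt : v i < w i generalizing v w
  · exact this hw hv hw01 hv01 hsum.symm (Ne.symm hne) hi.symm
      (lt_of_le_of_ne (not_lt.mp hlt) hi.symm)
  have hvi : v i = 0 := by rcases hv01 i with h | h <;> rcases hw01 i with h' | h' <;> linarith
  have hwi : w i = 1 := by rcases hv01 i with h | h <;> rcases hw01 i with h' | h' <;> linarith
  have hle (j : ι) : v j ≤ w j := by
    rcases le_total j i with hji | hij
    · have := hw hji; rcases hv01 j with h | h <;> linarith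
    · have := hv hij; rcases hw01 j with h | h <;> linarith
  exact (Finset.sum_lt_sum (fun j _ => hle j) ⟨i, Finset.mem_univ _, hlt⟩).ne hsum

instance (d : ℕ) : BorelSpace (Matrix (Fin d) (Fin d) ℝ) :=
  inferInstanceAs (BorelSpace (Fin d → Fin d → ℝ))

section Grass

variable {d k : ℕ} {P P' : Matrix (Fin d) (Fin d) ℝ}

theorem Grass.isHermitian (hP : P ∈ Grass d k) : P.IsHermitian :=
  isHermitian_iff_isSymm.mpr hP.1

theorem Grass.eigenvalues_eq_zero_or_eq_one (hP : P ∈ Grass d k) (i : Fin d) :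
    (Grass.isHermitian hP).eigenvalues i = 0 ∨ (Grass.isHermitian hP).eigenvalues i = 1 :=
  IsIdempotentElem.spectrum_subset ℝ hP.2.1
    ((Grass.isHermitian hP).eigenvalues_mem_spectrum_real i)

theorem Grass.sum_eigenvalues (hP : P ∈ Grass d k) :
    ∑ i, (Grass.isHermitian hP).eigenvalues i = k := by
  simpa [hP.2.2] using ((Grass.isHermitian hP).trace_eq_sum_eigenvalues).symm

theorem Grass.eigenvalues_eq (hP : P ∈ Grass d k) (hP' : P' ∈ Grass d k) :
    (Grass.isHermitian hP).eigenvalues = (Grass.isHermitian hP').eigenvalues := by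
  set e : Fin (Fintype.card (Fin d)) ≃ Fin d := Fintype.equivOfCardEq (Fintype.card_fin _)
  have h_eq₀ {Q : Matrix (Fin d) (Fin d) ℝ} (hQ : Q ∈ Grass d k) (j) :
      (Grass.isHermitian hQ).eigenvalues₀ j = (Grass.isHermitian hQ).eigenvalues (e j) := by
    simp [IsHermitian.eigenvalues, e]
  have h_sum₀ {Q : Matrix (Fin d) (Fin d) ℝ} (hQ : Q ∈ Grass d k) :
      ∑ j, (Grass.isHermitian hQ).eigenvalues₀ j = k := by
    simp only [h_eq₀ hQ, e.sum_comp, Grass.sum_eigenvalues hQ]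
  have h₀ : (Grass.isHermitian hP).eigenvalues₀ = (Grass.isHermitian hP').eigenvalues₀ :=
    Antitone.eq_of_sum_eq_of_forall_eq_zero_or_eq_one (Grass.isHermitian hP).eigenvalues₀_antitone
      (Grass.isHermitian hP').eigenvalues₀_antitone
      (fun j => h_eq₀ hP j ▸ Grass.eigenvalues_eq_zero_or_eq_one hP _)
      (fun j => h_eq₀ hP' j ▸ Grass.eigenvalues_eq_zero_or_eq_one hP' _)
      ((h_sum₀ hP).trans (h_sum₀ hP').symm)
  unfold IsHermitian.eigenvalues
  rw [h₀]

theorem Grass.exists_conj_eq (hP : P ∈ Grass d k) (hP' : P' ∈ Grass d k) :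
    ∃ V ∈ orthogonalGroup (Fin d) ℝ, P' = V * P * Vᵀ := by
  have h := (Grass.isHermitian hP).spectral_theorem
  have h' := (Grass.isHermitian hP').spectral_theorem
  rw [Grass.eigenvalues_eq hP hP'] at h
  set U := (Grass.isHermitian hP).eigenvectorUnitary
  set U' := (Grass.isHermitian hP').eigenvectorUnitary
  refine ⟨U' * star U, (U' * star U).2, ?_⟩
  calc P' = Unitary.conjStarAlgAut ℝ _ U' (Unitary.conjStarAlgAut ℝ _ (star U) P) := by
        rw [h', h, ← Unitary.conjStarAlgAut_mul_apply, ← Unitary.conjStarAlgAut_mul_apply,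
          mul_assoc, Unitary.star_mul_self, mul_one]
    _ = _ := by
        rw [← Unitary.conjStarAlgAut_mul_apply, Unitary.conjStarAlgAut_apply,
          star_eq_conjTranspose, conjTranspose_eq_transpose_of_trivial]
        rfl

theorem Grass.integrable_tensorPowVec (t : ℕ) (σ : Measure (Grass d k)) [IsFiniteMeasure σ] :
    Integrable (fun Q : Grass d k => tensorPowVec t Q.val) σ := by
  refine integrable_piLp_iff.mpr fun g => ?_
  simp only [tensorPowVec]
  refine Integrable.of_bound (C := 1)
    (continuous_finsetProd _ fun _ _ => continuous_subtype_val.matrix_elem _ _).aestronglyMeasurable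
    (ae_of_all _ fun Q => ?_)
  simp only [Real.norm_eq_abs, Finset.abs_prod]
  exact Finset.prod_le_one (fun _ _ => abs_nonneg _) fun s _ =>
    abs_apply_le_one_of_isSymm_of_mul_self Q.2.1 Q.2.2.1 _ _

theorem continuous_conjGrass {U : Matrix (Fin d) (Fin d) ℝ}
    (hU : U ∈ orthogonalGroup (Fin d) ℝ) : Continuous (conjGrass (k := k) hU) :=
  (by fun_prop : Continuous fun R : Grass d k => U * R.val * Uᵀ).subtype_mk _

theorem IsOrthInvariant.integral_comp_conjGrass {σ : Measure (Grass d k)}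
    (hσ : IsOrthInvariant σ) {U : Matrix (Fin d) (Fin d) ℝ} (hU : U ∈ orthogonalGroup (Fin d) ℝ)
    {E : Type*} [NormedAddCommGroup E] [NormedSpace ℝ E] {f : Grass d k → E}
    (hf : AEStronglyMeasurable f σ) :
    ∫ R, f (conjGrass hU R) ∂σ = ∫ R, f R ∂σ := by
  rw [← integral_map (continuous_conjGrass hU).measurable.aemeasurable (by rwa [hσ U hU]),
    hσ U hU]

theorem IsOrthInvariant.integral_trace_mul_pow_eq {σ : Measure (Grass d k)}
    (hσ : IsOrthInvariant σ) (t : ℕ) (Q Q' : Grass d k) :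
    ∫ R, trace (Q.val * R.val) ^ t ∂σ = ∫ R, trace (Q'.val * R.val) ^ t ∂σ := by
  obtain ⟨V, hV, hQ'⟩ := Grass.exists_conj_eq Q.2 Q'.2
  symm
  rw [← hσ.integral_comp_conjGrass hV (Continuous.aestronglyMeasurable (by fun_prop))]
  simp only [conjGrass, hQ', trace_conj_mul_conj hV]

end Grass

theorem fusionFramePotential_lower_bound_general (d k t : ℕ)
    (σ : Measure (Grass d k)) [IsProbabilityMeasure σ] (hσ : IsOrthInvariant σ)
    (n : ℕ) (P : Fin n → Grass d k) (ω : Fin n → ℝ) (hω : ∑ j, ω j = 1) :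
    ∑ i, ∑ j, ω i * ω j *
        (Matrix.trace ((P i : Matrix (Fin d) (Fin d) ℝ) * (P j : Matrix (Fin d) (Fin d) ℝ))) ^ t ≥
      ∫ Q : Grass d k, ∫ R : Grass d k,
        (Matrix.trace ((Q : Matrix (Fin d) (Fin d) ℝ) * (R : Matrix (Fin d) (Fin d) ℝ))) ^ t
          ∂σ ∂σ := by
  have h_kernel (Q R : Grass d k) :
      trace (Q.val * R.val) ^ t = ⟪tensorPowVec t Q.val, tensorPowVec t R.val⟫_ℝ := by
    rw [← trace_mul_transpose_pow_eq_inner, R.2.1.eq]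
  simp only [ge_iff_le, h_kernel]
  refine integral_integral_inner_le_sum_mul_inner (Grass.integrable_tensorPowVec t σ)
    (fun Q Q' => ?_) P hω
  simp only [← h_kernel]
  exact hσ.integral_trace_mul_pow_eq t Q Q'

/-- The `t`-fusion frame potential of points `P j ∈ G_{k,d}` with weights
summing to one is bounded from below by the double integral
`∫∫ tr(PR)^t dσ_{k,d}(P) dσ_{k,d}(R)` for any `O(d)`-invariant Borel probability measure
`σ_{k,d}` on `G_{k,d}`. -/
theorem fusionFramePotential_lower_bound (d k t : ℕ) (hk1 : 1 ≤ k) (hkd : k ≤ d - 1)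
    (σ : Measure (Grass d k)) [IsProbabilityMeasure σ] (hσ : IsOrthInvariant σ)
    (n : ℕ) (P : Fin n → Grass d k) (ω : Fin n → ℝ) (hω : ∑ j, ω j = 1) :
    ∑ i, ∑ j, ω i * ω j *
        (Matrix.trace ((P i : Matrix (Fin d) (Fin d) ℝ) * (P j : Matrix (Fin d) (Fin d) ℝ))) ^ t ≥
      ∫ Q : Grass d k, ∫ R : Grass d k,
        (Matrix.trace ((Q : Matrix (Fin d) (Fin d) ℝ) * (R : Matrix (Fin d) (Fin d) ℝ))) ^ t
          ∂σ ∂σ :=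
  fusionFramePotential_lower_bound_general d k t σ hσ n P ω hω
end

section
/- Let d ≥ 2, 1 ≤ k ≤ d−1 with k ≠ d/2, and t ≥ 1. Then dim Pol_t(G_{k,d} ∪ G_{d−k,d}) = dim Pol_t(G_{k,d}) + dim Pol_{t−1}(G_{d−k,d}). -/
open Matrix MvPolynomial

/-- Evaluation of a polynomial in the entries of a symmetric `d×d` matrix as a function on a
set `S` of matrices, as a linear map. -/
noncomputable def evalOn {d : ℕ} (S : Set (Matrix (Fin d) (Fin d) ℝ)) :
    MvPolynomial (Fin d × Fin d) ℝ →ₗ[ℝ] (S → ℝ) where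
  toFun p := fun P => MvPolynomial.eval (fun ij => (P : Matrix (Fin d) (Fin d) ℝ) ij.1 ij.2) p
  map_add' p q := by funext P; simp
  map_smul' c p := by funext P; simp [MvPolynomial.smul_eval]

/-- `Pol_t(S)`: the space of restrictions to `S` of real polynomials of degree at most `t` in
the entries of a `d×d` matrix, as a subspace of the functions `S → ℝ`. -/
noncomputable def PolOn {d : ℕ} (t : ℕ) (S : Set (Matrix (Fin d) (Fin d) ℝ)) :
    Submodule ℝ (S → ℝ) :=
  Submodule.map (evalOn S) (MvPolynomial.restrictTotalDegree (Fin d × Fin d) ℝ t)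


/-- The substitution `X ↦ 1 - X` (entrywise, with the identity matrix). -/
noncomputable def flipSub (d : ℕ) : Fin d × Fin d → MvPolynomial (Fin d × Fin d) ℝ :=
  fun ij => C ((1 : Matrix (Fin d) (Fin d) ℝ) ij.1 ij.2) - X ij

lemma sum_eq_zero_finsupp {σ : Type*} (m : σ →₀ ℕ) (h : (m.sum fun _ e => e) = 0) : m = 0 := by
  by_contra hne
  obtain ⟨v, hv⟩ : ∃ v, m v ≠ 0 := by
    by_contra hc
    push_neg at hc
    exact hne (Finsupp.ext fun v => by simpa using hc v)
  have hvs : v ∈ m.support := Finsupp.mem_support_iff.2 hv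
  have hle : m v ≤ m.sum fun _ e => e := by
    rw [Finsupp.sum]
    exact Finset.single_le_sum (fun i _ => Nat.zero_le _) hvs
  omega

lemma totalDegree_flip_monomial_key (d : ℕ) : ∀ (n : ℕ) (m : (Fin d × Fin d) →₀ ℕ),
    (m.sum fun _ e => e) = n →
    (C ((-1:ℝ)^n) * (bind₁ (flipSub d) (monomial m (1:ℝ))) - monomial m 1).totalDegree ≤ n - 1 := by
  intro n
  induction n with
  | zero =>
    intro m hm
    have : m = 0 := sum_eq_zero_finsupp m hm
    subst this
    simp [monomial_zero']
  | succ n ih =>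
    intro m hm
    -- pick a variable occurring in m
    have hmne : m ≠ 0 := by
      intro h; subst h; simp [Finsupp.sum] at hm
    obtain ⟨v, hv⟩ : ∃ v, m v ≠ 0 := by
      by_contra h
      push_neg at h
      exact hmne (Finsupp.ext fun v => by simpa using h v)
    set m' : (Fin d × Fin d) →₀ ℕ := m - Finsupp.single v 1 with hm'def
    have hm'add : m' + Finsupp.single v 1 = m := by
      ext w
      by_cases h : v = w
      · subst h
        simp only [hm'def, Finsupp.add_apply, Finsupp.tsub_apply, Finsupp.single_eq_same]
        omega
      · simp [hm'def, Finsupp.add_apply, Finsupp.tsub_apply, Finsupp.single_apply, h]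
    have hsum' : (m'.sum fun _ e => e) = n := by
      have h1 : ((m' + Finsupp.single v 1).sum fun _ e => e)
          = (m'.sum fun _ e => e) + ((Finsupp.single v 1).sum fun _ e => e) :=
        Finsupp.sum_add_index' (fun _ => rfl) (fun _ _ _ => rfl)
      have h2 : ((Finsupp.single v 1).sum fun _ e => e) = 1 := Finsupp.sum_single_index rfl
      rw [hm'add, h2] at h1
      omega
    have hmono : monomial m (1:ℝ) = monomial m' 1 * X v := by
      rw [X, monomial_mul, hm'add, mul_one]
    have hbind : bind₁ (flipSub d) (monomial m (1:ℝ))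
        = bind₁ (flipSub d) (monomial m' 1) * flipSub d v := by
      rw [hmono, _root_.map_mul, bind₁_X_right]
    set B' := bind₁ (flipSub d) (monomial m' (1:ℝ)) with hB'
    set M' : MvPolynomial (Fin d × Fin d) ℝ := monomial m' 1 with hM'
    set A' := C ((-1:ℝ)^n) * B' with hA'
    set E := A' - M' with hE
    have hdegE : E.totalDegree ≤ n - 1 := ih m' hsum'
    have hdegM' : M'.totalDegree ≤ n := by
      rw [hM', totalDegree_monomial _ (one_ne_zero (α := ℝ))]
      omega
    have hdegA' : A'.totalDegree ≤ n := by
      have : A' = E + M' := by rw [hE]; ring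
      rw [this]
      exact (totalDegree_add _ _).trans (max_le (hdegE.trans (by omega)) hdegM')
    set δ : ℝ := (1 : Matrix (Fin d) (Fin d) ℝ) v.1 v.2 with hδ
    have hrw : C ((-1:ℝ)^(n+1)) * (bind₁ (flipSub d) (monomial m (1:ℝ))) - monomial m 1
        = X v * E - C δ * A' := by
      rw [hbind, hmono]
      have hC : (C ((-1:ℝ)^(n+1)) : MvPolynomial (Fin d × Fin d) ℝ) = - C ((-1:ℝ)^n) := by
        rw [pow_succ, C_mul]; simp
      rw [hC, hE, hA', hM']
      show -(C ((-1:ℝ)^n)) * (B' * (C δ - X v)) - monomial m' 1 * X v = _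
      ring
    rw [hrw]
    refine (totalDegree_sub _ _).trans (max_le ?_ ?_)
    · rcases Nat.eq_zero_or_pos n with h0 | hpos
      · have : m' = 0 := sum_eq_zero_finsupp m' (by omega)
        have hE0 : E = 0 := by
          rw [hE, hA', hB', hM', this, h0]
          simp [monomial_zero']
        rw [hE0, mul_zero]
        simp
      · refine (totalDegree_mul _ _).trans ?_
        have : (X v : MvPolynomial (Fin d × Fin d) ℝ).totalDegree = 1 := totalDegree_X v
        omega
    · refine (totalDegree_mul _ _).trans ?_
      have : (C δ : MvPolynomial (Fin d × Fin d) ℝ).totalDegree = 0 := totalDegree_C δ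
      omega

lemma totalDegree_bind₁_flip_monomial (d : ℕ) (m : (Fin d × Fin d) →₀ ℕ) :
    (bind₁ (flipSub d) (monomial m (1:ℝ))).totalDegree ≤ (m.sum fun _ e => e) := by
  set n := (m.sum fun _ e => e) with hn
  have key := totalDegree_flip_monomial_key d n m rfl
  have hCC : (C ((-1:ℝ)^n)) * (C ((-1:ℝ)^n)) = (1 : MvPolynomial (Fin d × Fin d) ℝ) := by
    rw [← C_mul, ← pow_add]
    have : (-1:ℝ)^(n+n) = 1 := by
      have : Even (n + n) := ⟨n, rfl⟩
      exact this.neg_one_pow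
    rw [this, _root_.map_one]
  have hid : bind₁ (flipSub d) (monomial m (1:ℝ))
      = C ((-1:ℝ)^n) * (C ((-1:ℝ)^n) * (bind₁ (flipSub d) (monomial m (1:ℝ))) - monomial m 1)
        + C ((-1:ℝ)^n) * monomial m 1 := by
    calc bind₁ (flipSub d) (monomial m (1:ℝ))
        = (C ((-1:ℝ)^n) * (C ((-1:ℝ)^n))) * bind₁ (flipSub d) (monomial m (1:ℝ)) := by
          rw [hCC, one_mul]
      _ = _ := by ring
  rw [hid]
  refine (totalDegree_add _ _).trans (max_le ?_ ?_)
  · refine (totalDegree_mul _ _).trans ?_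
    have h1 := totalDegree_C ((-1:ℝ)^n) (σ := Fin d × Fin d)
    omega
  · refine (totalDegree_mul _ _).trans ?_
    have h1 := totalDegree_C ((-1:ℝ)^n) (σ := Fin d × Fin d)
    have h2 : ((monomial m (1:ℝ)) : MvPolynomial (Fin d × Fin d) ℝ).totalDegree
        = m.sum fun _ e => e := totalDegree_monomial _ (one_ne_zero (α := ℝ))
    omega

lemma aeval_eq_eval' {σ : Type*} (g : σ → ℝ) (p : MvPolynomial σ ℝ) :
    aeval g p = eval g p := by
  rw [aeval_def, Algebra.algebraMap_self]; rfl

lemma eval_bind₁' {σ : Type*} (g : σ → ℝ) (f : σ → MvPolynomial σ ℝ) (p : MvPolynomial σ ℝ) :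
    eval g (bind₁ f p) = eval (fun i => eval g (f i)) p := by
  have h := aeval_bind₁ (S := ℝ) g f p
  rw [aeval_eq_eval'] at h
  rw [h]
  simp only [aeval_eq_eval']

lemma totalDegree_flip_sub (d t : ℕ) (p : MvPolynomial (Fin d × Fin d) ℝ)
    (hp : p.totalDegree ≤ t) :
    (p - C ((-1:ℝ)^t) * bind₁ (flipSub d) p).totalDegree ≤ t - 1 := by
  have hsplit : p - C ((-1:ℝ)^t) * bind₁ (flipSub d) p
      = ∑ v ∈ p.support,
          (monomial v (coeff v p) - C ((-1:ℝ)^t) * bind₁ (flipSub d) (monomial v (coeff v p))) := by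
    conv_lhs => rw [p.as_sum]
    rw [map_sum (bind₁ (flipSub d)), Finset.mul_sum, Finset.sum_sub_distrib]
  rw [hsplit]
  refine (totalDegree_finset_sum _ _).trans (Finset.sup_le fun v hv => ?_)
  have hvt : (v.sum fun _ e => e) ≤ t := (le_totalDegree hv).trans hp
  have hmc : (monomial v (coeff v p) : MvPolynomial (Fin d × Fin d) ℝ)
      = C (coeff v p) * monomial v 1 := by rw [C_mul_monomial, mul_one]
  have hfac : monomial v (coeff v p) - C ((-1:ℝ)^t) * bind₁ (flipSub d) (monomial v (coeff v p))
      = C (coeff v p) * (monomial v 1 - C ((-1:ℝ)^t) * bind₁ (flipSub d) (monomial v 1)) := by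
    rw [hmc, _root_.map_mul, bind₁_C_right]
    ring
  rw [hfac]
  refine (totalDegree_mul _ _).trans ?_
  have hC := totalDegree_C (coeff v p) (σ := Fin d × Fin d)
  rcases eq_or_lt_of_le hvt with he | hlt
  · have key := totalDegree_flip_monomial_key d t v he
    have hneg : monomial v (1:ℝ) - C ((-1:ℝ)^t) * bind₁ (flipSub d) (monomial v 1)
        = -(C ((-1:ℝ)^t) * bind₁ (flipSub d) (monomial v 1) - monomial v 1) := by ring
    rw [hneg, totalDegree_neg]
    omega
  · have h1 : ((monomial v (1:ℝ)) : MvPolynomial (Fin d × Fin d) ℝ).totalDegree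
        = v.sum fun _ e => e := totalDegree_monomial _ (one_ne_zero (α := ℝ))
    have h2 := totalDegree_bind₁_flip_monomial d v
    have h3 := totalDegree_C ((-1:ℝ)^t) (σ := Fin d × Fin d)
    have h4 := totalDegree_mul (C ((-1:ℝ)^t)) (bind₁ (flipSub d) (monomial v (1:ℝ)))
    have h5 := totalDegree_sub (monomial v (1:ℝ))
      (C ((-1:ℝ)^t) * bind₁ (flipSub d) (monomial v (1:ℝ)))
    omega

lemma eval_flip_entry (d : ℕ) (P : Matrix (Fin d) (Fin d) ℝ) (ij : Fin d × Fin d) :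
    eval (fun ij : Fin d × Fin d => P ij.1 ij.2) (flipSub d ij)
      = (1 - P) ij.1 ij.2 := by
  simp [flipSub, Matrix.sub_apply]

lemma one_sub_mem_grass (d k : ℕ) (hk : k ≤ d) {P : Matrix (Fin d) (Fin d) ℝ}
    (hP : P ∈ Grass d (d - k)) : 1 - P ∈ Grass d k := by
  obtain ⟨hs, hi, htr⟩ := hP
  refine ⟨?_, ?_, ?_⟩
  · show (1 - P)ᵀ = 1 - P
    rw [Matrix.transpose_sub, Matrix.transpose_one, hs.eq]
  · have expand : (1 - P) * (1 - P) = 1 - P - P + P * P := by noncomm_ring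
    rw [expand, hi]
    abel
  · rw [Matrix.trace_sub, Matrix.trace_one, htr, Nat.cast_sub hk]
    simp [Fintype.card_fin]

lemma eval_trace_sum (d : ℕ) (P : Matrix (Fin d) (Fin d) ℝ) :
    eval (fun ij : Fin d × Fin d => P ij.1 ij.2) (∑ i : Fin d, X (i, i)) = P.trace := by
  rw [map_sum]
  simp [Matrix.trace, Matrix.diag]


set_option maxHeartbeats 1000000 in
set_option synthInstance.maxHeartbeats 400000 in
/-- For `1 ≤ k ≤ d−1` with `k ≠ d/2` and `t ≥ 1`,
`dim Pol_t(G_{k,d} ∪ G_{d−k,d}) = dim Pol_t(G_{k,d}) + dim Pol_{t−1}(G_{d−k,d})`. -/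
theorem dim_pol_union_pair (d k t : ℕ) (hd : 2 ≤ d) (hk1 : 1 ≤ k) (hkd : k ≤ d - 1)
    (hk2 : 2 * k ≠ d) (ht : 1 ≤ t) :
    Module.finrank ℝ (PolOn t (Grass d k ∪ Grass d (d - k))) =
      Module.finrank ℝ (PolOn t (Grass d k)) +
        Module.finrank ℝ (PolOn (t - 1) (Grass d (d - k))) := by
  classical
  have hk_le : k ≤ d := by omega
  set A := Grass d k with hA
  set B := Grass d (d - k) with hB
  set S := A ∪ B with hS
  -- restriction maps
  let resA : (↥S → ℝ) →ₗ[ℝ] (↥A → ℝ) :=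
    LinearMap.funLeft ℝ ℝ (Set.inclusion Set.subset_union_left)
  let resB : (↥S → ℝ) →ₗ[ℝ] (↥B → ℝ) :=
    LinearMap.funLeft ℝ ℝ (Set.inclusion Set.subset_union_right)
  have hresA : resA.comp (evalOn S) = evalOn A := rfl
  have hmapA : Submodule.map resA (PolOn t S) = PolOn t A := by
    rw [PolOn, ← Submodule.map_comp, hresA, PolOn]
  haveI finW : FiniteDimensional ℝ (PolOn t S) := by
    rw [PolOn]
    exact Module.Finite.map _ _
  set W := PolOn t S with hW
  let φ : W →ₗ[ℝ] (↥A → ℝ) := resA.comp W.subtype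
  have hrange : LinearMap.range φ = PolOn t A := by
    rw [LinearMap.range_comp, Submodule.range_subtype, hmapA]
  -- the map from the kernel to functions on B
  let Φ : LinearMap.ker φ →ₗ[ℝ] (↥B → ℝ) :=
    resB.comp (W.subtype.comp (LinearMap.ker φ).subtype)
  have hΦ0 : ∀ x : LinearMap.ker φ, Φ x = 0 → x = 0 := by
    intro x hx0
    have hxA : resA (x.1.1 : ↥S → ℝ) = 0 := x.2
    have hxB : resB (x.1.1 : ↥S → ℝ) = 0 := hx0
    have hx1 : (x.1.1 : ↥S → ℝ) = 0 := by
      funext s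
      rcases s.2 with h | h
      · have := congrFun hxA ⟨s.1, h⟩
        exact this
      · have := congrFun hxB ⟨s.1, h⟩
        exact this
    exact Subtype.ext (Subtype.ext hx1)
  have hΦinj : Function.Injective Φ := by
    intro x y hxy
    have hxA : resA (x.1.1 : ↥S → ℝ) = 0 := x.2
    have hyA : resA (y.1.1 : ↥S → ℝ) = 0 := y.2
    refine Subtype.ext (Subtype.ext (funext fun s => ?_))
    rcases s.2 with h | h
    · have hx := congrFun hxA ⟨s.1, h⟩
      have hy := congrFun hyA ⟨s.1, h⟩
      exact hx.trans hy.symm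
    · exact congrFun hxy ⟨s.1, h⟩
  have hΦrange : LinearMap.range Φ = PolOn (t - 1) B := by
    apply le_antisymm
    · rintro _ ⟨x, rfl⟩
      obtain ⟨p, hpdeg, hpe⟩ := Submodule.mem_map.mp x.1.2
      have hpdeg' : p.totalDegree ≤ t := (mem_restrictTotalDegree _ _ p).mp hpdeg
      set q := p - C ((-1:ℝ)^t) * bind₁ (flipSub d) p with hq
      have hqdeg : q.totalDegree ≤ t - 1 := totalDegree_flip_sub d t p hpdeg'
      have hxA : resA (x.1.1 : ↥S → ℝ) = 0 := x.2
      rw [PolOn]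
      refine Submodule.mem_map.mpr ⟨q, (mem_restrictTotalDegree _ _ q).mpr hqdeg, ?_⟩
      funext P
      have hvanish : eval (fun ij : Fin d × Fin d => (P : Matrix (Fin d) (Fin d) ℝ) ij.1 ij.2)
          (bind₁ (flipSub d) p) = 0 := by
        rw [eval_bind₁']
        have hmem : (1 : Matrix (Fin d) (Fin d) ℝ) - P ∈ A :=
          one_sub_mem_grass d k hk_le P.2
        have hz := congrFun hxA ⟨(1 : Matrix (Fin d) (Fin d) ℝ) - P, hmem⟩
        have hz' : (x.1.1 : ↥S → ℝ)
            ⟨(1 : Matrix (Fin d) (Fin d) ℝ) - P, Or.inl hmem⟩ = 0 := hz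
        rw [← hpe] at hz'
        have := hz'
        simp only [evalOn, LinearMap.coe_mk, AddHom.coe_mk] at this
        rw [show (fun ij : Fin d × Fin d =>
            eval (fun ij : Fin d × Fin d => (P : Matrix (Fin d) (Fin d) ℝ) ij.1 ij.2)
              (flipSub d ij)) = fun ij : Fin d × Fin d =>
              ((1 : Matrix (Fin d) (Fin d) ℝ) - P) ij.1 ij.2 from
          funext fun ij => eval_flip_entry d P ij]
        exact this
      show (evalOn B) q P = (x.1.1 : ↥S → ℝ) ⟨P.1, Or.inr P.2⟩
      have hxp : (x.1.1 : ↥S → ℝ) ⟨P.1, Or.inr P.2⟩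
          = eval (fun ij : Fin d × Fin d => (P : Matrix (Fin d) (Fin d) ℝ) ij.1 ij.2) p := by
        rw [← hpe]; rfl
      rw [hxp]
      show eval (fun ij : Fin d × Fin d => (P : Matrix (Fin d) (Fin d) ℝ) ij.1 ij.2) q = _
      rw [hq, map_sub, _root_.map_mul, eval_C, hvanish, mul_zero, sub_zero]
    · rintro g hg
      rw [PolOn] at hg
      obtain ⟨q, hqdeg, rfl⟩ := Submodule.mem_map.mp hg
      have hqdeg' : q.totalDegree ≤ t - 1 := (mem_restrictTotalDegree _ _ q).mp hqdeg
      set c : ℝ := (d : ℝ) - 2 * k with hc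
      have hcne : c ≠ 0 := by
        intro h
        apply hk2
        have : (d : ℝ) = 2 * k := by rw [hc] at h; linarith
        exact_mod_cast this.symm
      set ℓ : MvPolynomial (Fin d × Fin d) ℝ := (∑ i : Fin d, X (i, i)) - C (k : ℝ) with hℓ
      have hℓdeg : ℓ.totalDegree ≤ 1 := by
        rw [hℓ]
        refine (totalDegree_sub _ _).trans (max_le ?_ ?_)
        · refine (totalDegree_finset_sum _ _).trans (Finset.sup_le fun i _ => ?_)
          rw [totalDegree_X]
        · rw [totalDegree_C]
          omega
      have hevalℓ : ∀ P : Matrix (Fin d) (Fin d) ℝ,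
          eval (fun ij : Fin d × Fin d => P ij.1 ij.2) ℓ = P.trace - k := by
        intro P
        rw [hℓ, map_sub, eval_C, eval_trace_sum]
      set p := C c⁻¹ * (ℓ * q) with hp
      have hpdeg : p.totalDegree ≤ t := by
        rw [hp]
        refine (totalDegree_mul _ _).trans ?_
        have h2 := totalDegree_mul ℓ q
        have h3 := totalDegree_C (c⁻¹) (σ := Fin d × Fin d)
        omega
      have hFW : evalOn S p ∈ W := by
        rw [hW, PolOn]
        exact Submodule.mem_map.mpr ⟨p, (mem_restrictTotalDegree _ _ p).mpr hpdeg, rfl⟩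
      have hFker : (⟨evalOn S p, hFW⟩ : W) ∈ LinearMap.ker φ := by
        rw [LinearMap.mem_ker]
        show resA (evalOn S p) = 0
        funext a
        show eval (fun ij : Fin d × Fin d => (a : Matrix (Fin d) (Fin d) ℝ) ij.1 ij.2) p = 0
        rw [hp, _root_.map_mul, _root_.map_mul, hevalℓ]
        have htr : (a : Matrix (Fin d) (Fin d) ℝ).trace = k := a.2.2.2
        rw [htr, sub_self, zero_mul, mul_zero]
      refine ⟨⟨⟨evalOn S p, hFW⟩, hFker⟩, ?_⟩
      funext P
      show eval (fun ij : Fin d × Fin d => (P : Matrix (Fin d) (Fin d) ℝ) ij.1 ij.2) p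
        = (evalOn B) q P
      rw [hp, _root_.map_mul, _root_.map_mul, hevalℓ]
      have htr : (P : Matrix (Fin d) (Fin d) ℝ).trace = ((d - k : ℕ) : ℝ) := P.2.2.2
      rw [htr, Nat.cast_sub hk_le, eval_C]
      show c⁻¹ * (((d:ℝ) - k - k) * _) = _
      have : (d:ℝ) - k - k = c := by rw [hc]; ring
      rw [this, inv_mul_cancel_left₀ hcne]
      rfl
  -- put it together
  have hrank := LinearMap.finrank_range_add_finrank_ker φ
  rw [hrange] at hrank
  have hker : Module.finrank ℝ (LinearMap.ker φ) = Module.finrank ℝ (PolOn (t - 1) B) := by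
    rw [← LinearMap.finrank_range_of_inj hΦinj, hΦrange]
  rw [← hrank, hker]
end
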